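/- arXiv:2007.15298 — 8 statements merged into one kernel-verified Lean document; each statement's English description precedes it below -/
import Mathlib

section
/- Every continuous symmetric function ϕ : ℝⁿ → ℝ can be represented exactly in polarized form: there exists a continuous function g : ℝⁿ → ℝ such that ϕ(x₁,…,xₙ) = g(∑_{i=1}^n η(x_i)) for all (x₁,…,xₙ) ∈ ℝⁿ, where η : ℝ → ℝⁿ is given by η(t) = (t, t², …, tⁿ). -/
/-!
The power sums `p₁, …, pₙ` of `x ∈ ℝⁿ` determine the elementary symmetric functions of
the coordinates (Newton's identities), hence the polynomial `∏ (X - xᵢ)` and the multiset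
of coordinates. So `p = (p₁, …, pₙ)` is injective on the closed cone of sorted tuples; it is
also proper, because `p₂` (or `p₁` when `n = 1`) bounds every coordinate. Thus `p` restricted
to sorted tuples is a closed embedding, and by Tietze the continuous function `ϕ` on sorted
tuples factors as `g ∘ p` with `g` continuous on all of `ℝⁿ`. Sorting an arbitrary `x`
changes neither `ϕ x` (symmetry) nor `p x`.
-/

open MvPolynomial Finset

section NewtonIdentities

variable {σ R : Type*} [Fintype σ] [CommRing R] [IsDomain R] [CharZero R]

theorem aeval_esymm_eq_of_sum_pow_eq {x y : σ → R} {m : ℕ}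
    (h : ∀ k ∈ Icc 1 m, ∑ i, x i ^ k = ∑ i, y i ^ k) {k : ℕ} (hk : k ≤ m) :
    aeval x (esymm σ R k) = aeval y (esymm σ R k) := by
  induction k using Nat.strong_induction_on with
  | _ k ih =>
    rcases Nat.eq_zero_or_pos k with rfl | hk0
    · simp
    have newton (z : σ → R) := congrArg (aeval z) (mul_esymm_eq_sum σ R k)
    simp only [map_mul, map_sum, map_pow, map_neg, map_one, map_natCast] at newton
    have hsum : ∑ a ∈ antidiagonal k with a.1 < k,
          (-1) ^ a.1 * aeval x (esymm σ R a.1) * aeval x (psum σ R a.2)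
        = ∑ a ∈ antidiagonal k with a.1 < k,
          (-1) ^ a.1 * aeval y (esymm σ R a.1) * aeval y (psum σ R a.2) := by
      refine sum_congr rfl fun a ha => ?_
      rw [mem_filter, HasAntidiagonal.mem_antidiagonal] at ha
      have hpsum : ∑ i, x i ^ a.2 = ∑ i, y i ^ a.2 :=
        h a.2 (mem_Icc.mpr ⟨by omega, by omega⟩)
      simp only [ih a.1 ha.2 (by omega), psum, map_sum, map_pow, aeval_X, hpsum]
    exact mul_left_cancel₀ (Nat.cast_ne_zero.mpr hk0.ne') <| by rw [newton x, newton y, hsum]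

theorem univ_map_eq_of_sum_pow_eq {x y : σ → R}
    (h : ∀ k ∈ Icc 1 (Fintype.card σ), ∑ i, x i ^ k = ∑ i, y i ^ k) :
    univ.val.map x = univ.val.map y := by
  have hcard (z : σ → R) : Multiset.card (univ.val.map z) = Fintype.card σ := by simp
  have hesymm : ∀ k ≤ Fintype.card σ, (univ.val.map x).esymm k = (univ.val.map y).esymm k := by
    intro k hk
    rw [← aeval_esymm_eq_multiset_esymm σ R, ← aeval_esymm_eq_multiset_esymm σ R,
      aeval_esymm_eq_of_sum_pow_eq h hk]
  -- Vieta: both multisets are the roots of the same monic polynomial.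
  have hprod : ((univ.val.map x).map (fun t => Polynomial.X - Polynomial.C t)).prod
      = ((univ.val.map y).map (fun t => Polynomial.X - Polynomial.C t)).prod := by
    ext k
    rcases le_or_gt k (Fintype.card σ) with hk | hk
    · rw [Multiset.prod_X_sub_C_coeff _ ((hcard x).symm ▸ hk),
        Multiset.prod_X_sub_C_coeff _ ((hcard y).symm ▸ hk), hcard, hcard,
        hesymm _ (Nat.sub_le _ k)]
    · rw [Polynomial.coeff_eq_zero_of_natDegree_lt, Polynomial.coeff_eq_zero_of_natDegree_lt] <;>
        rwa [Polynomial.natDegree_multiset_prod_X_sub_C_eq_card, hcard]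
  simpa only [Polynomial.roots_multiset_prod_X_sub_C] using congrArg Polynomial.roots hprod

end NewtonIdentities

theorem eq_of_monotone_of_univ_map_eq {α : Type*} [LinearOrder α] {n : ℕ} {x y : Fin n → α}
    (hx : Monotone x) (hy : Monotone y) (h : univ.val.map x = univ.val.map y) : x = y := by
  rw [Fin.univ_val_map, Fin.univ_val_map, Multiset.coe_eq_coe] at h
  exact List.ofFn_injective <|
    h.eq_of_sortedLE (List.sortedLE_ofFn_iff.mpr hx) (List.sortedLE_ofFn_iff.mpr hy)

def powerSums {R : Type*} [CommSemiring R] {n : ℕ} (x : Fin n → R) : Fin n → R :=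
  fun b => ∑ i, x i ^ ((b : ℕ) + 1)

section PowerSums

variable {n : ℕ}

theorem powerSums_comp_perm {R : Type*} [CommSemiring R] (x : Fin n → R)
    (π : Equiv.Perm (Fin n)) :
    powerSums (x ∘ π) = powerSums x :=
  funext fun b => Equiv.sum_comp π (fun i => x i ^ ((b : ℕ) + 1))

theorem univ_map_eq_of_powerSums_eq {R : Type*} [CommRing R] [IsDomain R] [CharZero R]
    {x y : Fin n → R} (h : powerSums x = powerSums y) : univ.val.map x = univ.val.map y := by
  refine univ_map_eq_of_sum_pow_eq fun k hk => ?_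
  rw [mem_Icc, Fintype.card_fin] at hk
  simpa [powerSums, Nat.sub_add_cancel hk.1] using congrFun h ⟨k - 1, by omega⟩

theorem injOn_powerSums_setOf_monotone {R : Type*} [Field R] [LinearOrder R]
    [IsStrictOrderedRing R] :
    Set.InjOn (powerSums (n := n) (R := R)) {x | Monotone x} := fun _ hx _ hy h =>
  eq_of_monotone_of_univ_map_eq hx hy (univ_map_eq_of_powerSums_eq h)

theorem continuous_powerSums {R : Type*} [CommSemiring R] [TopologicalSpace R]
    [IsTopologicalSemiring R] :
    Continuous (powerSums (n := n) (R := R)) :=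
  continuous_pi fun _ => continuous_finsetSum _ fun i _ => (continuous_apply i).pow _

theorem abs_le_norm_powerSums_add_one (x : Fin n → ℝ) (i : Fin n) :
    |x i| ≤ ‖powerSums x‖ + 1 := by
  rcases lt_or_ge n 2 with hn | hn
  · obtain rfl : n = 1 := by have := i.isLt; omega
    have : |powerSums x 0| ≤ ‖powerSums x‖ := norm_le_pi_norm (powerSums x) 0
    simp only [powerSums, Fin.val_zero, zero_add, pow_one, univ_unique, sum_singleton] at this
    rw [Subsingleton.elim i default]
    linarith
  · have hsq : x i ^ 2 ≤ ‖powerSums x‖ :=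
      calc x i ^ 2 ≤ ∑ j, x j ^ 2 := single_le_sum (fun j _ => sq_nonneg (x j)) (mem_univ i)
        _ = powerSums x ⟨1, hn⟩ := rfl
        _ ≤ ‖powerSums x‖ := (le_abs_self _).trans (norm_le_pi_norm (powerSums x) _)
    nlinarith [abs_nonneg (x i), sq_abs (x i), norm_nonneg (powerSums x)]

theorem isProperMap_powerSums : IsProperMap (powerSums : (Fin n → ℝ) → Fin n → ℝ) := by
  refine isProperMap_iff_isCompact_preimage.mpr ⟨continuous_powerSums, fun K hK => ?_⟩
  obtain ⟨M, hM⟩ := hK.isBounded.exists_norm_le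
  refine Metric.isCompact_of_isClosed_isBounded (hK.isClosed.preimage continuous_powerSums) ?_
  refine isBounded_iff_forall_norm_le.mpr ⟨M + 1, fun x hx => ?_⟩
  have hxM : ‖powerSums x‖ ≤ M := hM _ hx
  refine (pi_norm_le_iff_of_nonneg (by linarith [norm_nonneg (powerSums x)])).mpr fun i => ?_
  simpa only [Real.norm_eq_abs] using (abs_le_norm_powerSums_add_one x i).trans (by linarith)

theorem isClosedEmbedding_powerSums_monotone :
    Topology.IsClosedEmbedding fun x : {x : Fin n → ℝ // Monotone x} => powerSums x.1 := by
  have hproper : IsProperMap fun x : {x : Fin n → ℝ // Monotone x} => powerSums x.1 :=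
    isProperMap_powerSums.comp isClosed_monotone.isClosedEmbedding_subtypeVal.isProperMap
  exact .of_continuous_injective_isClosedMap hproper.continuous
    (fun x y h => Subtype.ext (injOn_powerSums_setOf_monotone x.2 y.2 h)) hproper.isClosedMap

end PowerSums

/-- Every continuous symmetric function `ϕ : ℝⁿ → ℝ` can be represented exactly in
polarized form `ϕ(x) = g(∑ᵢ η(xᵢ))` with `η(t) = (t, t², …, tⁿ)` and continuous `g`. -/
theorem symmetric_polarized_superposition (n : ℕ) (ϕ : (Fin n → ℝ) → ℝ)
    (hcont : Continuous ϕ)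
    (hsym : ∀ π : Equiv.Perm (Fin n), ∀ x : Fin n → ℝ, ϕ (x ∘ π) = ϕ x) :
    ∃ g : (Fin n → ℝ) → ℝ, Continuous g ∧
      ∀ x : Fin n → ℝ, ϕ x = g (fun b : Fin n => ∑ i : Fin n, (x i) ^ ((b : ℕ) + 1)) := by
  obtain ⟨g, hg⟩ := ContinuousMap.exists_extension' isClosedEmbedding_powerSums_monotone
    ⟨fun x : {x : Fin n → ℝ // Monotone x} => ϕ x, hcont.comp continuous_subtype_val⟩
  refine ⟨g, g.continuous, fun x => ?_⟩
  change ϕ x = g (powerSums x)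
  calc ϕ x = ϕ (x ∘ Tuple.sort x) := (hsym _ x).symm
    _ = g (powerSums (x ∘ Tuple.sort x)) := (congrFun hg ⟨_, Tuple.monotone_sort x⟩).symm
    _ = g (powerSums x) := by rw [powerSums_comp_perm]
end

section
/- For every antisymmetric function ψ : ℝⁿ → ℝ there exist functions φ₁,…,φₙ : ℝⁿ → ℝ, each with φᵢ(x_j | x_{≠j}) symmetric in x_{≠j}, such that ψ(x) = det Φ(x) for all x ∈ ℝⁿ, where Φ(x)_{j,i} := φᵢ(x_j | x_{≠j}) is the generalized Slater matrix. -/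
/-!
The orbital `φᵢ(t | y)` vanishes unless exactly `i` of the `yₖ` are smaller than `t`; there it is
`1`, except for `i = 0`, where it is `ψ` evaluated at the sorted rearrangement of `(t, y)`. Rank
and sorted rearrangement are symmetric in `y`. If the coordinates of `x` are distinct, the rank of
`x_j` is `ρ⁻¹ j` for the sorting permutation `ρ`, so `Φ(x)` is the diagonal matrix
`diag(ψ (x ∘ ρ), 1, …, 1)` with rows permuted by `ρ⁻¹`, and
`det Φ(x) = sgn ρ · ψ (x ∘ ρ) = ψ x` by antisymmetry. If `x_j = x_k` with `j ≠ k`, rows `j` and `k`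
of `Φ(x)` coincide, and `ψ x = 0` since `ψ x = -ψ x`.
-/

open Finset

namespace GeneralizedSlater

variable {α R : Type*} {m : ℕ}

section Order

variable [LinearOrder α]

def rank (t : α) (y : Fin m → α) : ℕ := #{k | y k < t}

lemma rank_comp_perm (t : α) (y : Fin m → α) (π : Equiv.Perm (Fin m)) :
    rank t (y ∘ π) = rank t y :=
  card_equiv π (by simp)

lemma rank_succAbove (x : Fin (m + 1) → α) (j : Fin (m + 1)) :
    rank (x j) (x ∘ j.succAbove) = #{l | x l < x j} := by
  refine card_nbij j.succAbove (fun k hk => by simpa using hk)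
    (fun a _ b _ hab => Fin.succAbove_right_injective hab) fun l hl => ?_
  replace hl : x l < x j := by simpa using hl
  obtain ⟨k, rfl⟩ := Fin.exists_succAbove_eq (ne_of_apply_ne x hl.ne)
  exact ⟨k, by simpa using hl, rfl⟩

lemma card_lt_eq_sort_symm {n : ℕ} {x : Fin n → α} (hx : Function.Injective x) (j : Fin n) :
    #{l | x l < x j} = (Tuple.sort x).symm j := by
  set ρ := Tuple.sort x
  have hmono : StrictMono (x ∘ ρ) :=
    (Tuple.monotone_sort x).strictMono_of_injective (hx.comp ρ.injective)
  calc #{l | x l < x j} = #{i | x (ρ i) < x (ρ (ρ.symm j))} := by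
        simpa using (card_equiv ρ (by simp)).symm
    _ = #(Iio (ρ.symm j)) := congrArg card <| by
        ext i; simpa using hmono.lt_iff_lt (a := i) (b := ρ.symm j)
    _ = ρ.symm j := Fin.card_Iio _

def sorted {n : ℕ} (z : Fin n → α) : Fin n → α := z ∘ Tuple.sort z

lemma sorted_comp_perm {n : ℕ} (z : Fin n → α) (σ : Equiv.Perm (Fin n)) :
    sorted (z ∘ σ) = sorted z :=
  Tuple.comp_perm_comp_sort_eq_comp_sort

lemma sorted_cons_comp_perm (t : α) (y : Fin m → α) (π : Equiv.Perm (Fin m)) :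
    sorted (Fin.cons t (y ∘ π) : Fin (m + 1) → α) = sorted (Fin.cons t y) := by
  have hcons : (Fin.cons t (y ∘ π) : Fin (m + 1) → α) =
      Fin.cons t y ∘ Equiv.Perm.decomposeFin.symm (0, π) := by
    ext a
    cases a using Fin.cases <;> simp [Equiv.Perm.decomposeFin_symm_apply_succ]
  rw [hcons, sorted_comp_perm]

lemma sorted_cons_succAbove (x : Fin (m + 1) → α) (j : Fin (m + 1)) :
    sorted (Fin.cons (x j) (x ∘ j.succAbove)) = sorted x := by
  change sorted (Fin.cons (x j) (j.removeNth x)) = _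
  rw [Fin.cons_removeNth_eq_comp_cycleRange_symm, sorted_comp_perm]

end Order

section Slater

def slaterMatrix (φ : Fin (m + 1) → α × (Fin m → α) → R) (x : Fin (m + 1) → α) :
    Matrix (Fin (m + 1)) (Fin (m + 1)) R :=
  Matrix.of fun j i => φ i (x j, x ∘ j.succAbove)

variable [LinearOrder α] [CommRing R]

def orbital (ψ : (Fin (m + 1) → α) → R) (i : Fin (m + 1)) (p : α × (Fin m → α)) : R :=
  if rank p.1 p.2 = i then (if i = 0 then ψ (sorted (Fin.cons p.1 p.2)) else 1) else 0

lemma orbital_comp_perm (ψ : (Fin (m + 1) → α) → R) (i : Fin (m + 1)) (t : α)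
    (π : Equiv.Perm (Fin m)) (y : Fin m → α) :
    orbital ψ i (t, y ∘ π) = orbital ψ i (t, y) := by
  simp only [orbital, rank_comp_perm, sorted_cons_comp_perm]

lemma slaterMatrix_orbital_apply (ψ : (Fin (m + 1) → α) → R) (x : Fin (m + 1) → α)
    (j i : Fin (m + 1)) :
    slaterMatrix (orbital ψ) x j i =
      if #{l | x l < x j} = i then (if i = 0 then ψ (sorted x) else 1) else 0 := by
  simp only [slaterMatrix, orbital, Matrix.of_apply, rank_succAbove, sorted_cons_succAbove]

lemma slaterMatrix_orbital_of_injective (ψ : (Fin (m + 1) → α) → R) {x : Fin (m + 1) → α}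
    (hx : Function.Injective x) :
    slaterMatrix (orbital ψ) x =
      (Matrix.diagonal fun i => if i = 0 then ψ (sorted x) else 1).submatrix
        (Tuple.sort x).symm id := by
  ext j i
  rw [slaterMatrix_orbital_apply, card_lt_eq_sort_symm hx]
  simp only [Fin.val_inj, Matrix.submatrix_apply, Matrix.diagonal_apply, id_eq]
  split_ifs <;> simp_all

lemma det_slaterMatrix_orbital_of_injective (ψ : (Fin (m + 1) → α) → R)
    {x : Fin (m + 1) → α} (hx : Function.Injective x) :
    (slaterMatrix (orbital ψ) x).det = (Equiv.Perm.sign (Tuple.sort x) : ℤ) * ψ (sorted x) := by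
  rw [slaterMatrix_orbital_of_injective ψ hx, Matrix.det_permute, Matrix.det_diagonal,
    Fin.prod_univ_succ, Equiv.Perm.sign_symm]
  simp [Fin.succ_ne_zero]

lemma det_slaterMatrix_orbital_of_not_injective (ψ : (Fin (m + 1) → α) → R)
    {x : Fin (m + 1) → α} (hx : ¬ Function.Injective x) :
    (slaterMatrix (orbital ψ) x).det = 0 := by
  obtain ⟨j, k, hjk, hne⟩ : ∃ j k, x j = x k ∧ j ≠ k := by
    simpa [Function.Injective] using hx
  exact Matrix.det_zero_of_row_eq hne <| funext fun i => by
    simp only [slaterMatrix_orbital_apply, hjk]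

end Slater

section Antisymmetric

variable [Ring R]

lemma eq_zero_of_not_injective [NoZeroDivisors R] [CharZero R] {n : ℕ}
    {ψ : (Fin n → α) → R}
    (hanti : ∀ π : Equiv.Perm (Fin n), ∀ x, ψ (x ∘ π) = (Equiv.Perm.sign π : ℤ) * ψ x)
    {x : Fin n → α} (hx : ¬ Function.Injective x) : ψ x = 0 := by
  obtain ⟨j, k, hjk, hne⟩ : ∃ j k, x j = x k ∧ j ≠ k := by
    simpa [Function.Injective] using hx
  have hswap : x ∘ Equiv.swap j k = x := by
    ext l
    simp only [Function.comp_apply, Equiv.swap_apply_def]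
    split_ifs <;> simp_all
  have := hanti (Equiv.swap j k) x
  rw [hswap, Equiv.Perm.sign_swap hne] at this
  exact CharZero.eq_neg_self_iff.mp (by simpa using this)

lemma sign_mul_sign_mul {n : ℕ} (σ : Equiv.Perm (Fin n)) (a : R) :
    (Equiv.Perm.sign σ : ℤ) * ((Equiv.Perm.sign σ : ℤ) * a) = a := by
  rw [← mul_assoc, ← Int.cast_mul, ← Units.val_mul, Int.units_mul_self]
  simp

end Antisymmetric

theorem det_slaterMatrix_orbital [LinearOrder α] [CommRing R] [NoZeroDivisors R] [CharZero R]
    {ψ : (Fin (m + 1) → α) → R}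
    (hanti : ∀ π : Equiv.Perm (Fin (m + 1)), ∀ x, ψ (x ∘ π) = (Equiv.Perm.sign π : ℤ) * ψ x)
    (x : Fin (m + 1) → α) : (slaterMatrix (orbital ψ) x).det = ψ x := by
  by_cases hx : Function.Injective x
  · rw [det_slaterMatrix_orbital_of_injective ψ hx, sorted, hanti, sign_mul_sign_mul]
  · rw [det_slaterMatrix_orbital_of_not_injective ψ hx, eq_zero_of_not_injective hanti hx]

end GeneralizedSlater

open GeneralizedSlater

/-- Every antisymmetric function `ψ : ℝⁿ → ℝ` (here `n = m+1 ≥ 1`) is a generalized Slater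
determinant `ψ(x) = det Φ(x)` with `Φ(x)_{j,i} = φᵢ(x_j | x_{≠j})`, where each
`φᵢ(x_j | x_{≠j})` is symmetric in the remaining arguments `x_{≠j}`. -/
theorem antisymmetric_generalized_slater (m : ℕ) (ψ : (Fin (m + 1) → ℝ) → ℝ)
    (hanti : ∀ π : Equiv.Perm (Fin (m + 1)), ∀ x : Fin (m + 1) → ℝ,
      ψ (x ∘ π) = ((Equiv.Perm.sign π : ℤ) : ℝ) * ψ x) :
    ∃ φ : Fin (m + 1) → ℝ × (Fin m → ℝ) → ℝ,
      (∀ i : Fin (m + 1), ∀ t : ℝ, ∀ π : Equiv.Perm (Fin m), ∀ y : Fin m → ℝ,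
        φ i (t, y ∘ π) = φ i (t, y)) ∧
      ∀ x : Fin (m + 1) → ℝ,
        ψ x = Matrix.det (Matrix.of fun j i : Fin (m + 1) =>
          φ i (x j, fun k : Fin m => x (j.succAbove k))) :=
  ⟨orbital ψ, orbital_comp_perm ψ, fun x => (det_slaterMatrix_orbital hanti x).symm⟩
end

section
/- Let k ∈ ℕ₀ and let ψ : ℝⁿ → ℝ be antisymmetric and of class C^{k+n(n+1)/2}. Then there exist functions φ₁,…,φₙ : ℝⁿ → ℝ of class C^k, each with φᵢ(x_j | x_{≠j}) symmetric in x_{≠j}, such that ψ(x) = det Φ(x) for all x ∈ ℝⁿ, where Φ(x)_{j,i} := φᵢ(x_j | x_{≠j}). -/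
/-!
An antisymmetric `ψ` vanishes on every hyperplane `x_i = x_j`. By Hadamard's lemma each such
vanishing lets one divide by `x_j - x_i` at the cost of one derivative, and the quotient still
vanishes on the other hyperplanes (off `x_i = x_j` by division, on it by continuity). Dividing out
all `n(n-1)/2` factors gives `ψ = V · S` with `V` the Vandermonde determinant and `S ∈ C^k`.
Since `ψ` and `V` change sign in the same way, averaging `S` over all permutations does not change
`V · S`, so `S` may be taken symmetric. Then `φ₀(t | y) = S(t, y)` and `φᵢ(t | y) = tⁱ` (`i ≥ 1`)
give a matrix whose determinant is `S · V = ψ`.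
-/

open MeasureTheory Metric Set Finset Equiv

universe u

section HadamardLemma

-- One universe for `E` and `F`, so that the induction can pass from `F` to `E →L[ℝ] F`.
variable {E F : Type u} [NormedAddCommGroup E] [NormedSpace ℝ E] [FiniteDimensional ℝ E]
  [NormedAddCommGroup F] [NormedSpace ℝ F]

theorem hasFDerivAt_intervalIntegral_of_contDiff_uncurry {G : E → ℝ → F}
    (hG : ContDiff ℝ 1 (Function.uncurry G)) (a b : ℝ) (x₀ : E) :
    HasFDerivAt (fun x => ∫ t in a..b, G x t)
      (∫ t in a..b, fderiv ℝ (Function.uncurry G) (x₀, t) ∘L ContinuousLinearMap.inl ℝ E ℝ)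
      x₀ := by
  have hG' : Continuous fun p : E × ℝ =>
      fderiv ℝ (Function.uncurry G) p ∘L ContinuousLinearMap.inl ℝ E ℝ :=
    (hG.continuous_fderiv one_ne_zero).clm_comp continuous_const
  obtain ⟨C, hC⟩ := ((isCompact_closedBall x₀ 1).prod isCompact_uIcc).exists_bound_of_continuousOn
    hG'.continuousOn
  refine intervalIntegral.hasFDerivAt_integral_of_dominated_of_fderiv_le (μ := volume)
    (a := a) (b := b) (bound := fun _ => C)
    (F' := fun x t => fderiv ℝ (Function.uncurry G) (x, t) ∘L ContinuousLinearMap.inl ℝ E ℝ)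
    (ball_mem_nhds x₀ zero_lt_one) (.of_forall fun x => ?_) ?_ ?_
    (.of_forall fun t ht x hx => ?_) intervalIntegrable_const (.of_forall fun t _ x _ => ?_)
  · exact (hG.continuous.comp (Continuous.prodMk_right x)).aestronglyMeasurable
  · exact (hG.continuous.comp (Continuous.prodMk_right x₀)).intervalIntegrable _ _
  · exact (hG'.comp (Continuous.prodMk_right x₀)).aestronglyMeasurable
  · exact hC (x, t) ⟨ball_subset_closedBall hx, uIoc_subset_uIcc ht⟩
  · exact (hG.differentiable one_ne_zero (x, t)).hasFDerivAt.comp x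
      (hasFDerivAt_prodMk_left (𝕜 := ℝ) x t)

theorem contDiff_intervalIntegral_of_contDiff_uncurry (r : ℕ) {G : E → ℝ → F}
    (hG : ContDiff ℝ r (Function.uncurry G)) (a b : ℝ) :
    ContDiff ℝ r fun x => ∫ t in a..b, G x t := by
  induction r generalizing F with
  | zero =>
    rw [Nat.cast_zero, contDiff_zero] at hG ⊢
    exact intervalIntegral.continuous_parametric_intervalIntegral_of_continuous' hG a b
  | succ r ih =>
    have hG₁ : ContDiff ℝ 1 (Function.uncurry G) :=
      hG.of_le (by exact_mod_cast Nat.le_add_left 1 r)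
    have hderiv := hasFDerivAt_intervalIntegral_of_contDiff_uncurry hG₁ a b
    rw [Nat.cast_succ, contDiff_succ_iff_fderiv] at hG ⊢
    refine ⟨fun x => (hderiv x).differentiableAt, by simp, ?_⟩
    rw [funext fun x => (hderiv x).fderiv]
    exact ih (G := fun x t => fderiv ℝ (Function.uncurry G) (x, t) ∘L ContinuousLinearMap.inl ℝ E ℝ)
      (hG.2.2.clm_comp contDiff_const)

theorem exists_contDiff_eq_smul_of_eq_zero_on_ker [CompleteSpace F] (r : ℕ) {f : E → F}
    (hf : ContDiff ℝ (r + 1 : ℕ) f) (L : E →L[ℝ] ℝ) {v : E} (hv : L v = 1)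
    (hzero : ∀ x, L x = 0 → f x = 0) :
    ∃ g : E → F, ContDiff ℝ r g ∧ ∀ x, f x = L x • g x := by
  set A : E → ℝ → E := fun x t => x + ((t - 1) * L x) • v with hA
  have hA_smooth : ContDiff ℝ r (Function.uncurry A) := by
    simp only [hA, Function.uncurry_def]; fun_prop
  refine ⟨fun x => ∫ t in (0 : ℝ)..1, fderiv ℝ f (A x t) v,
    contDiff_intervalIntegral_of_contDiff_uncurry r (G := fun x t => fderiv ℝ f (A x t) v)
      (((hf.fderiv_right (by norm_cast)).comp hA_smooth).clm_apply contDiff_const) 0 1,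
    fun x => ?_⟩
  have hderiv (t : ℝ) : HasDerivAt (fun t => f (A x t)) (L x • fderiv ℝ f (A x t) v) t := by
    have hAt : HasDerivAt (A x) (L x • v) t := by
      simpa only [one_mul] using
        ((((hasDerivAt_id' t).sub_const 1).mul_const (L x)).smul_const v).const_add x
    have h := ((hf.differentiable (by simp)) (A x t)).hasFDerivAt.comp_hasDerivAt t hAt
    rwa [ContinuousLinearMap.map_smul] at h
  have hcont : Continuous fun t => fderiv ℝ f (A x t) v :=
    ((hf.continuous_fderiv (by simp)).comp (by simp only [hA]; fun_prop)).clm_apply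
      continuous_const
  have hftc := intervalIntegral.integral_eq_sub_of_hasDerivAt (fun t _ => hderiv t)
    ((continuous_const.smul hcont).intervalIntegrable 0 1)
  have hA₀ : f (A x 0) = 0 := hzero _ (by simp [hA, hv])
  have hA₁ : A x 1 = x := by simp [hA]
  rw [intervalIntegral.integral_smul, hA₁, hA₀, sub_zero] at hftc
  exact hftc.symm

end HadamardLemma

theorem eq_zero_of_eq_zero_off_hyperplane {n : ℕ} {g : (Fin n → ℝ) → ℝ} (hg : Continuous g)
    {i j a b : Fin n} (hij : i ≠ j) (hia : i ≠ a) (hib : i ≠ b)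
    (h : ∀ y : Fin n → ℝ, y a = y b → y i ≠ y j → g y = 0) {x : Fin n → ℝ} (hx : x a = x b) :
    g x = 0 := by
  set u : ℝ → Fin n → ℝ := fun t => x + t • Pi.single i 1 with hu
  have hgu : g ∘ u = fun _ => 0 := by
    refine Continuous.ext_on (dense_compl_singleton (x j - x i)) (hg.comp (by fun_prop))
      continuous_const fun t ht => h _ ?_ ?_
    · simp [hu, hia.symm, hib.symm, hx]
    · intro h'
      apply ht
      simp only [hu, Pi.add_apply, Pi.smul_apply, Pi.single_eq_same, Pi.single_eq_of_ne hij.symm,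
        smul_eq_mul, mul_one, mul_zero, add_zero, mem_singleton_iff] at h' ⊢
      linarith
  simpa [hu] using congrFun hgu 0

theorem exists_contDiff_eq_prod_sub_mul {n : ℕ} (r : ℕ) (P : Finset (Fin n × Fin n))
    (hP : ∀ p ∈ P, p.1 < p.2) {f : (Fin n → ℝ) → ℝ} (hf : ContDiff ℝ (r + #P : ℕ) f)
    (hzero : ∀ p ∈ P, ∀ x : Fin n → ℝ, x p.1 = x p.2 → f x = 0) :
    ∃ g : (Fin n → ℝ) → ℝ, ContDiff ℝ r g ∧ ∀ x, f x = (∏ p ∈ P, (x p.2 - x p.1)) * g x := by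
  classical
  induction P using Finset.induction_on generalizing f with
  | empty => exact ⟨f, by simpa using hf, by simp⟩
  | insert p P hpP ih =>
    have hp := hP p (mem_insert_self p P)
    rw [card_insert_of_notMem hpP, ← add_assoc] at hf
    obtain ⟨g₁, hg₁, hfg₁⟩ := exists_contDiff_eq_smul_of_eq_zero_on_ker _ hf
      (.proj p.2 - .proj p.1) (v := Pi.single p.2 1) (by simp [hp.ne])
      fun x hx => hzero p (mem_insert_self p P) x (sub_eq_zero.1 hx).symm
    simp only [sub_apply, ContinuousLinearMap.proj_apply, smul_eq_mul] at hfg₁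
    have hg₁zero : ∀ q ∈ P, ∀ x : Fin n → ℝ, x q.1 = x q.2 → g₁ x = 0 := by
      intro q hq x hx
      have hoff (y : Fin n → ℝ) (hy : y q.1 = y q.2) (hne : y p.1 ≠ y p.2) : g₁ y = 0 := by
        have hfy := hzero q (mem_insert_of_mem hq) y hy
        rw [hfg₁] at hfy
        exact (mul_eq_zero.1 hfy).resolve_left (sub_ne_zero.2 hne.symm)
      have hq' := hP q (mem_insert_of_mem hq)
      have hpq : p ≠ q := by rintro rfl; exact hpP hq
      have hdisj : (p.1 ≠ q.1 ∧ p.1 ≠ q.2) ∨ (p.2 ≠ q.1 ∧ p.2 ≠ q.2) := by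
        rw [Ne, Prod.ext_iff] at hpq
        simp only [Ne, Fin.ext_iff, Fin.lt_def] at hpq hp hq' ⊢
        omega
      rcases hdisj with ⟨h₁, h₂⟩ | ⟨h₁, h₂⟩
      · exact eq_zero_of_eq_zero_off_hyperplane hg₁.continuous hp.ne h₁ h₂ hoff hx
      · exact eq_zero_of_eq_zero_off_hyperplane hg₁.continuous hp.ne' h₁ h₂
          (fun y hy hne => hoff y hy hne.symm) hx
    obtain ⟨g, hg, hg₁g⟩ := ih (fun q hq => hP q (mem_insert_of_mem hq)) hg₁ hg₁zero
    exact ⟨g, hg, fun x => by rw [hfg₁, hg₁g, prod_insert hpP, mul_assoc]⟩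

theorem Matrix.det_vandermonde_eq_prod_filter_lt {R : Type*} [CommRing R] {n : ℕ}
    (x : Fin n → R) :
    (vandermonde x).det =
      ∏ p ∈ univ.filter (fun p : Fin n × Fin n => p.1 < p.2), (x p.2 - x p.1) := by
  rw [det_vandermonde, prod_filter, Fintype.prod_prod_type]
  refine prod_congr rfl fun i _ => ?_
  rw [← prod_filter, filter_lt_eq_Ioi]

theorem Matrix.det_vandermonde_comp_perm {R : Type*} [CommRing R] {n : ℕ} (σ : Perm (Fin n))
    (x : Fin n → R) : (vandermonde (x ∘ σ)).det = ((Perm.sign σ : ℤ) : R) * (vandermonde x).det :=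
  det_permute σ (vandermonde x)

theorem Fin.card_filter_fst_lt_snd (n : ℕ) :
    #(univ.filter fun p : Fin n × Fin n => p.1 < p.2) = n * (n - 1) / 2 := by
  rw [card_eq_sum_ones, sum_filter, Fintype.sum_prod_type_right]
  simp_rw [← sum_filter, ← card_eq_sum_ones, filter_gt_eq_Iio, Fin.card_Iio]
  rw [Fin.sum_univ_eq_sum_range (fun j => j), sum_range_id]

theorem exists_contDiff_eq_det_vandermonde_mul {n : ℕ} (r : ℕ) {f : (Fin n → ℝ) → ℝ}
    (hf : ContDiff ℝ (r + n * (n - 1) / 2 : ℕ) f)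
    (hzero : ∀ (x : Fin n → ℝ) (i j : Fin n), i ≠ j → x i = x j → f x = 0) :
    ∃ g : (Fin n → ℝ) → ℝ, ContDiff ℝ r g ∧ ∀ x, f x = (Matrix.vandermonde x).det * g x := by
  simp_rw [Matrix.det_vandermonde_eq_prod_filter_lt]
  exact exists_contDiff_eq_prod_sub_mul r _ (fun p hp => (mem_filter.1 hp).2)
    (by rwa [Fin.card_filter_fst_lt_snd]) fun p hp x hx => hzero x _ _ (mem_filter.1 hp).2.ne hx

section Alternating

variable {ι α : Type*} [DecidableEq ι] [Fintype ι]

theorem eq_zero_of_alternating {R : Type*} [Ring R] [NoZeroDivisors R] [CharZero R]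
    {ψ : (ι → α) → R} (hψ : ∀ (σ : Perm ι) x, ψ (x ∘ σ) = ((Perm.sign σ : ℤ) : R) * ψ x)
    {x : ι → α} {i j : ι} (hij : i ≠ j) (hx : x i = x j) : ψ x = 0 := by
  have hswap : x ∘ swap i j = x := by
    ext l
    rcases eq_or_ne l i with rfl | hli
    · simp [hx]
    rcases eq_or_ne l j with rfl | hlj
    · simp [hx]
    · simp [swap_apply_of_ne_of_ne hli hlj]
  have h := hψ (swap i j) x
  rw [hswap, Perm.sign_swap hij] at h
  exact CharZero.eq_neg_self_iff.1 (by simpa using h)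

variable {K : Type*} [Field K]

def symmetrize (f : (ι → α) → K) (x : ι → α) : K :=
  (Fintype.card (Perm ι) : K)⁻¹ * ∑ σ : Perm ι, f (x ∘ σ)

theorem symmetrize_comp_perm (f : (ι → α) → K) (σ : Perm ι) (x : ι → α) :
    symmetrize f (x ∘ σ) = symmetrize f x := by
  unfold symmetrize
  congr 1
  exact Equiv.sum_comp (Equiv.mulLeft σ) fun τ => f (x ∘ τ)

theorem eq_mul_symmetrize_of_alternating [CharZero K] {ψ V f : (ι → α) → K}
    (hψ : ∀ (σ : Perm ι) x, ψ (x ∘ σ) = ((Perm.sign σ : ℤ) : K) * ψ x)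
    (hV : ∀ (σ : Perm ι) x, V (x ∘ σ) = ((Perm.sign σ : ℤ) : K) * V x)
    (h : ∀ x, ψ x = V x * f x) (x : ι → α) : ψ x = V x * symmetrize f x := by
  have hσ (σ : Perm ι) : V x * f (x ∘ σ) = ψ x := by
    set s : K := ((Perm.sign σ : ℤ) : K)
    have hs : s * s = 1 := by
      rw [← Int.cast_mul, ← Units.val_mul, Int.units_mul_self, Units.val_one, Int.cast_one]
    have h' := h (x ∘ σ)
    rw [hψ, hV] at h'
    calc V x * f (x ∘ σ) = s * (s * V x * f (x ∘ σ)) := by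
          rw [← mul_assoc, ← mul_assoc, hs, one_mul]
      _ = ψ x := by rw [← h', ← mul_assoc, hs, one_mul]
  unfold symmetrize
  rw [mul_left_comm, mul_sum, Fintype.sum_congr _ _ hσ, sum_const, card_univ, nsmul_eq_mul,
    inv_mul_cancel_left₀ (Nat.cast_ne_zero.2 Fintype.card_ne_zero)]

theorem ContDiff.symmetrize {n : WithTop ℕ∞} {f : (ι → ℝ) → ℝ} (hf : ContDiff ℝ n f) :
    ContDiff ℝ n (symmetrize f) :=
  contDiff_const.mul <| ContDiff.sum fun σ _ =>
    hf.comp (contDiff_pi.2 fun i => contDiff_apply ℝ ℝ (σ i))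

end Alternating

section SlaterOrbital

variable {R : Type*} [CommRing R] {m : ℕ}

def slaterOrbital (S : (Fin (m + 1) → R) → R) (i : Fin (m + 1)) (p : R × (Fin m → R)) : R :=
  (if i = 0 then S (Fin.cons p.1 p.2) else 1) * p.1 ^ (i : ℕ)

variable {S : (Fin (m + 1) → R) → R}

theorem slaterOrbital_comp_perm (hS : ∀ (σ : Perm (Fin (m + 1))) x, S (x ∘ σ) = S x)
    (i : Fin (m + 1)) (t : R) (π : Perm (Fin m)) (y : Fin m → R) :
    slaterOrbital S i (t, y ∘ π) = slaterOrbital S i (t, y) := by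
  have hcons : (Fin.cons t (y ∘ π) : Fin (m + 1) → R) =
      Fin.cons t y ∘ Perm.decomposeFin.symm (0, π) := by
    ext l
    cases l using Fin.cases <;> simp [Perm.decomposeFin_symm_apply_succ]
  simp only [slaterOrbital, hcons, hS]

theorem det_slaterOrbital (hS : ∀ (σ : Perm (Fin (m + 1))) x, S (x ∘ σ) = S x)
    (x : Fin (m + 1) → R) :
    (Matrix.of fun j i : Fin (m + 1) => slaterOrbital S i (x j, fun l => x (j.succAbove l))).det =
      (Matrix.vandermonde x).det * S x := by
  have hcol (j : Fin (m + 1)) : S (Fin.cons (x j) fun l => x (j.succAbove l)) = S x :=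
    (congrArg S (Fin.cons_removeNth_eq_comp_cycleRange_symm x j)).trans (hS _ x)
  calc _ = (Matrix.of fun j i => (if i = 0 then S x else 1) * Matrix.vandermonde x j i).det := by
        simp only [slaterOrbital, hcol, Matrix.vandermonde_apply]
    _ = _ := by rw [Matrix.det_mul_row, Fin.prod_univ_succ]; simp [mul_comm]

theorem ContDiff.slaterOrbital {n : WithTop ℕ∞} {S : (Fin (m + 1) → ℝ) → ℝ}
    (hS : ContDiff ℝ n S) (i : Fin (m + 1)) : ContDiff ℝ n (slaterOrbital S i) := by
  have hcons : ContDiff ℝ n fun p : ℝ × (Fin m → ℝ) => (Fin.cons p.1 p.2 : Fin (m + 1) → ℝ) :=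
    contDiff_pi.2 fun l => l.cases (by simpa using contDiff_fst) fun s => by
      simp only [Fin.cons_succ]; exact (contDiff_apply ℝ ℝ s).comp contDiff_snd
  unfold _root_.slaterOrbital
  split_ifs
  · exact (hS.comp hcons).mul (contDiff_fst.pow _)
  · exact contDiff_const.mul (contDiff_fst.pow _)

end SlaterOrbital

/-- If `ψ : ℝⁿ → ℝ` (here `n = m+1 ≥ 1`) is antisymmetric and of class
`C^{k + n(n+1)/2}`, then it is a generalized Slater determinant `ψ = det Φ` whose
entries `Φ(x)_{j,i} = φᵢ(x_j | x_{≠j})` are of class `C^k` and symmetric in `x_{≠j}`. -/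
theorem antisymmetric_slater_smooth (m k : ℕ) (ψ : (Fin (m + 1) → ℝ) → ℝ)
    (hanti : ∀ π : Equiv.Perm (Fin (m + 1)), ∀ x : Fin (m + 1) → ℝ,
      ψ (x ∘ π) = ((Equiv.Perm.sign π : ℤ) : ℝ) * ψ x)
    (hsmooth : ContDiff ℝ (k + (m + 1) * (m + 2) / 2 : ℕ) ψ) :
    ∃ φ : Fin (m + 1) → ℝ × (Fin m → ℝ) → ℝ,
      (∀ i : Fin (m + 1), ContDiff ℝ (k : ℕ) (φ i)) ∧
      (∀ i : Fin (m + 1), ∀ t : ℝ, ∀ π : Equiv.Perm (Fin m), ∀ y : Fin m → ℝ,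
        φ i (t, y ∘ π) = φ i (t, y)) ∧
      ∀ x : Fin (m + 1) → ℝ,
        ψ x = Matrix.det (Matrix.of fun j i : Fin (m + 1) =>
          φ i (x j, fun l : Fin m => x (j.succAbove l))) := by
  have hsmooth' : ContDiff ℝ (k + (m + 1) * (m + 1 - 1) / 2 : ℕ) ψ :=
    hsmooth.of_le <| Nat.cast_le.2 <| Nat.add_le_add_left
      (Nat.div_le_div_right (Nat.mul_le_mul_left _ (by omega))) k
  obtain ⟨S, hS, hψS⟩ := exists_contDiff_eq_det_vandermonde_mul k hsmooth'
    fun x i j hij hx => eq_zero_of_alternating hanti hij hx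
  have hψ := eq_mul_symmetrize_of_alternating hanti Matrix.det_vandermonde_comp_perm hψS
  have hsymm := symmetrize_comp_perm S
  exact ⟨slaterOrbital (symmetrize S), hS.symmetrize.slaterOrbital, slaterOrbital_comp_perm hsymm,
    fun x => by rw [det_slaterOrbital hsymm, hψ]⟩
end

section
/- Let k ≥ 1 and let f : ℝ → ℝ be k-times differentiable at every point of ℝ with f(0) = 0. Define g : ℝ → ℝ by g(x) := f(x)/x for x ≠ 0 and g(0) := f′(0). Then g is (k−1)-times continuously differentiable on ℝ, i.e. g ∈ C^{k−1}(ℝ). -/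
/-!
For `f 0 = 0` the function is `dslope f 0`, which is continuous as soon as `f` is
differentiable; this is the case `k = 1`. For `k ≥ 2`, `dslope f 0 x = ∫₀¹ f'(s x) ds` is the
moment `M₀ f'`, where `M_m h x = ∫₀¹ sᵐ h (s x) ds`. Integration by parts gives
`x • M_{m+1} h' = h - (m + 1) • M_m h`, hence `(M_m h)' = M_{m+1} h'` for `h ∈ C¹`: each
derivative of `g` trades one derivative of `f` for a higher moment. The last step needs `h` only
differentiable: then `(M_m h)' = dslope (h - (m + 1) • M_m h) 0`, which is continuous because
`h - (m + 1) • M_m h` is differentiable. The derivative `h'(0) / (m + 2)` of `M_m h` at `0`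
comes from `‖h (s x) - h 0 - s x h'(0)‖ ≤ ε ‖x‖` for `s ∈ [0, 1]` and `x` small.
-/

open intervalIntegral Topology Set

theorem Differentiable.continuous_dslope {𝕜 F : Type*} [NontriviallyNormedField 𝕜]
    [NormedAddCommGroup F] [NormedSpace 𝕜 F] {f : 𝕜 → F} (hf : Differentiable 𝕜 f) (a : 𝕜) :
    Continuous (dslope f a) := by
  refine continuous_iff_continuousAt.2 fun x => ?_
  rcases eq_or_ne x a with rfl | hx
  · exact continuousAt_dslope_same.2 (hf x)
  · exact (continuousAt_dslope_of_ne hx).2 (hf x).continuousAt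

theorem ite_div_eq_dslope {f : ℝ → ℝ} (hf0 : f 0 = 0) :
    (fun x : ℝ => if x = 0 then deriv f 0 else f x / x) = dslope f 0 := by
  funext x
  rcases eq_or_ne x 0 with rfl | hx
  · simp
  · simp [hx, dslope_of_ne, slope_def_field, hf0]

variable {E : Type*} [NormedAddCommGroup E] [NormedSpace ℝ E]

theorem hasDerivAt_comp_mul_const {h : ℝ → E} (hh : Differentiable ℝ h) (x s : ℝ) :
    HasDerivAt (fun s => h (s * x)) (x • deriv h (s * x)) s :=
  (hh (s * x)).hasDerivAt.scomp s (hasDerivAt_mul_const x)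

noncomputable def momentIntegral (m : ℕ) (h : ℝ → E) (x : ℝ) : E :=
  ∫ s in (0 : ℝ)..1, s ^ m • h (s * x)

section

variable (m : ℕ) {h : ℝ → E}

theorem momentIntegral_of_ne {x : ℝ} (hx : x ≠ 0) :
    momentIntegral m h x = (x ^ (m + 1))⁻¹ • ∫ t in (0 : ℝ)..x, t ^ m • h t := by
  have key : ∀ s : ℝ, s ^ m • h (s * x) = (x ^ m)⁻¹ • ((s * x) ^ m • h (s * x)) := fun s => by
    rw [smul_smul, mul_pow, mul_comm (s ^ m), inv_mul_cancel_left₀ (pow_ne_zero m hx)]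
  simp_rw [momentIntegral, key]
  rw [integral_smul, integral_comp_mul_right (fun t => t ^ m • h t) hx, zero_mul, one_mul,
    smul_smul, pow_succ, mul_inv]

variable [CompleteSpace E]

theorem momentIntegral_zero_right : momentIntegral m h 0 = ((m : ℝ) + 1)⁻¹ • h 0 := by
  simp [momentIntegral, intervalIntegral.integral_smul_const, integral_pow, div_eq_inv_mul]

theorem hasDerivAt_momentIntegral_of_ne (hc : Continuous h) {x : ℝ} (hx : x ≠ 0) :
    HasDerivAt (momentIntegral m h) (x⁻¹ • (h x - ((m : ℝ) + 1) • momentIntegral m h x)) x := by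
  have hint : Continuous fun t : ℝ => t ^ m • h t := by fun_prop
  have hI := integral_hasDerivAt_right (hint.intervalIntegrable 0 x)
    (hint.stronglyMeasurableAtFilter _ _) hint.continuousAt
  have hpow := (hasDerivAt_pow (m + 1) x).inv (pow_ne_zero _ hx)
  have hEq : momentIntegral m h =ᶠ[𝓝 x]
      fun y => (y ^ (m + 1))⁻¹ • ∫ t in (0 : ℝ)..y, t ^ m • h t := by
    filter_upwards [isOpen_compl_singleton.mem_nhds hx] with y hy
    exact momentIntegral_of_ne m hy
  refine ((hpow.smul hI).congr_of_eventuallyEq hEq).congr_deriv ?_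
  rw [momentIntegral_of_ne m hx, Pi.inv_apply, add_tsub_cancel_right]
  match_scalars <;> field_simp <;> ring

theorem momentIntegral_sub_linear (hc : Continuous h) (h' : E) (x : ℝ) :
    momentIntegral m h x - momentIntegral m h 0 - x • (((m : ℝ) + 2)⁻¹ • h')
      = ∫ s in (0 : ℝ)..1, s ^ m • (h (s * x) - h 0 - (s * x) • h') := by
  have hA : Continuous fun s : ℝ => s ^ m • h (s * x) := by fun_prop
  have hB : Continuous fun s : ℝ => s ^ m • h 0 + (s ^ (m + 1) * x) • h' := by fun_prop
  have hsplit : ∀ s : ℝ, s ^ m • (h (s * x) - h 0 - (s * x) • h')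
      = s ^ m • h (s * x) - (s ^ m • h 0 + (s ^ (m + 1) * x) • h') := fun s => by module
  simp_rw [hsplit]
  rw [integral_sub (hA.intervalIntegrable 0 1) (hB.intervalIntegrable 0 1),
    integral_add (Continuous.intervalIntegrable (by fun_prop) 0 1)
      (Continuous.intervalIntegrable (by fun_prop) 0 1), intervalIntegral.integral_smul_const,
    intervalIntegral.integral_smul_const, intervalIntegral.integral_mul_const, integral_pow,
    integral_pow, momentIntegral_zero_right, momentIntegral]
  match_scalars <;> ring

theorem hasDerivAt_momentIntegral_zero (hc : Continuous h) {h' : E} (hd : HasDerivAt h h' 0) :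
    HasDerivAt (momentIntegral m h) (((m : ℝ) + 2)⁻¹ • h') 0 := by
  rw [hasDerivAt_iff_isLittleO_nhds_zero] at hd ⊢
  simp only [zero_add] at hd ⊢
  refine Asymptotics.IsLittleO.of_bound fun ε hε => ?_
  obtain ⟨δ, hδ, hball⟩ := Metric.eventually_nhds_iff_ball.1 (hd.def hε)
  filter_upwards [Metric.ball_mem_nhds 0 hδ] with x hx
  rw [momentIntegral_sub_linear m hc]
  calc _ ≤ ε * ‖x‖ * |1 - 0| := norm_integral_le_of_norm_le_const fun s hs => ?_
    _ = ε * ‖x‖ := by simp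
  rw [uIoc_of_le zero_le_one] at hs
  have hsx : ‖s * x‖ ≤ ‖x‖ := by
    rw [norm_mul, Real.norm_of_nonneg hs.1.le]
    exact mul_le_of_le_one_left (norm_nonneg x) hs.2
  calc ‖s ^ m • (h (s * x) - h 0 - (s * x) • h')‖
      ≤ 1 * (ε * ‖s * x‖) := by
        rw [norm_smul]
        gcongr
        · rw [norm_pow, Real.norm_of_nonneg hs.1.le]
          exact pow_le_one₀ hs.1.le hs.2
        · exact hball _ (mem_ball_zero_iff.2 (hsx.trans_lt (mem_ball_zero_iff.1 hx)))
    _ ≤ ε * ‖x‖ := by rw [one_mul]; gcongr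

theorem hasDerivAt_momentIntegral (hh : Differentiable ℝ h) (x : ℝ) :
    HasDerivAt (momentIntegral m h)
      (dslope (fun y => h y - ((m : ℝ) + 1) • momentIntegral m h y) 0 x) x := by
  have hM0 := hasDerivAt_momentIntegral_zero m hh.continuous (hh 0).hasDerivAt
  rcases eq_or_ne x 0 with rfl | hx
  · rw [dslope_same]
    convert hM0 using 1
    refine ((hh 0).hasDerivAt.sub (hM0.const_smul ((m : ℝ) + 1))).deriv.trans ?_
    match_scalars
    field_simp
    ring
  · rw [dslope_of_ne _ hx, slope_def_module, momentIntegral_zero_right, smul_smul,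
      mul_inv_cancel₀ (by positivity), one_smul, sub_self, sub_zero, sub_zero]
    exact hasDerivAt_momentIntegral_of_ne m hh.continuous hx

theorem contDiff_one_momentIntegral (hh : Differentiable ℝ h) :
    ContDiff ℝ 1 (momentIntegral m h) := by
  have hd := hasDerivAt_momentIntegral m hh
  have hdiff : Differentiable ℝ (momentIntegral m h) := fun x => (hd x).differentiableAt
  refine contDiff_one_iff_deriv.2 ⟨hdiff, ?_⟩
  rw [funext fun x => (hd x).deriv]
  exact (hh.sub (hdiff.const_smul _)).continuous_dslope 0

theorem smul_momentIntegral_succ_deriv (hh : ContDiff ℝ 1 h) (x : ℝ) :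
    x • momentIntegral (m + 1) (deriv h) x = h x - ((m : ℝ) + 1) • momentIntegral m h x := by
  have hh' := hh.continuous_deriv_one
  have hparts := integral_smul_deriv_eq_deriv_smul (a := 0) (b := 1)
    (u := fun s : ℝ => s ^ (m + 1)) (u' := fun s => ((m : ℝ) + 1) * s ^ m)
    (fun s _ => by simpa using hasDerivAt_pow (m + 1) s)
    (fun s _ => hasDerivAt_comp_mul_const (hh.differentiable one_ne_zero) x s)
    (Continuous.intervalIntegrable (by fun_prop) 0 1)
    (Continuous.intervalIntegrable (by fun_prop) 0 1)
  simp only [momentIntegral, ← integral_smul, smul_comm x, hparts, one_pow, one_mul, one_smul,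
    zero_pow (Nat.succ_ne_zero m), zero_smul, sub_zero, mul_smul]

theorem deriv_momentIntegral (hh : ContDiff ℝ 1 h) :
    deriv (momentIntegral m h) = momentIntegral (m + 1) (deriv h) := by
  funext x
  rcases eq_or_ne x 0 with rfl | hx
  · rw [(hasDerivAt_momentIntegral_zero m hh.continuous
      ((hh.differentiable one_ne_zero) 0).hasDerivAt).deriv, momentIntegral_zero_right]
    congr 2
    push_cast
    ring
  · rw [(hasDerivAt_momentIntegral_of_ne m hh.continuous hx).deriv,
      ← smul_momentIntegral_succ_deriv m hh, smul_smul, inv_mul_cancel₀ hx, one_smul]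

theorem dslope_eq_momentIntegral_deriv (hh : ContDiff ℝ 1 h) :
    dslope h 0 = momentIntegral 0 (deriv h) := by
  funext x
  rcases eq_or_ne x 0 with rfl | hx
  · simp [momentIntegral_zero_right]
  · have hFTC : x • momentIntegral 0 (deriv h) x = h x - h 0 := by
      have hh' := hh.continuous_deriv_one
      simp only [momentIntegral, pow_zero, one_smul, ← integral_smul]
      simpa using integral_eq_sub_of_hasDerivAt
        (fun s _ => hasDerivAt_comp_mul_const (hh.differentiable one_ne_zero) x s)
        (Continuous.intervalIntegrable (by fun_prop) 0 1)
    rw [dslope_of_ne _ hx, slope_def_module, sub_zero, ← hFTC, smul_smul, inv_mul_cancel₀ hx,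
      one_smul]

end

theorem contDiff_momentIntegral [CompleteSpace E] (n : ℕ) {m : ℕ} {h : ℝ → E}
    (hh : ∀ i < n + 1, Differentiable ℝ (iteratedDeriv i h)) :
    ContDiff ℝ (n + 1) (momentIntegral m h) := by
  induction n generalizing m h with
  | zero => simpa using contDiff_one_momentIntegral m (hh 0 one_pos)
  | succ n ih =>
    have hh1 : ContDiff ℝ 1 h := contDiff_one_iff_deriv.2
      ⟨hh 0 (by omega), iteratedDeriv_one (f := h) ▸ (hh 1 (by omega)).continuous⟩
    have hM := contDiff_one_momentIntegral m (hh 0 (by omega))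
    refine contDiff_succ_iff_deriv.2 ⟨hM.differentiable one_ne_zero, by simp, ?_⟩
    rw [deriv_momentIntegral m hh1]
    push_cast
    exact ih fun i hi => iteratedDeriv_succ' (f := h) ▸ hh (i + 1) (by omega)

/-- If `f : ℝ → ℝ` is `k`-times differentiable at every point (`k ≥ 1`) with `f(0) = 0`,
then `g(x) := f(x)/x` for `x ≠ 0`, `g(0) := f'(0)`, is `(k-1)`-times continuously
differentiable. -/
theorem div_by_x_contDiff (k : ℕ) (hk : 1 ≤ k) (f : ℝ → ℝ) (hf0 : f 0 = 0)
    (hdiff : ∀ i : ℕ, i < k → Differentiable ℝ (iteratedDeriv i f)) :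
    ContDiff ℝ ((k - 1 : ℕ) : ℕ∞)
      (fun x : ℝ => if x = 0 then deriv f 0 else f x / x) := by
  rw [ite_div_eq_dslope hf0]
  have hf : Differentiable ℝ f := hdiff 0 hk
  obtain ⟨n, rfl⟩ : ∃ n, k = n + 1 := ⟨k - 1, by omega⟩
  cases n with
  | zero => simpa using hf.continuous_dslope 0
  | succ n =>
    have hf1 : ContDiff ℝ 1 f := contDiff_one_iff_deriv.2
      ⟨hf, iteratedDeriv_one (f := f) ▸ (hdiff 1 (by omega)).continuous⟩
    rw [dslope_eq_momentIntegral_deriv hf1]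
    simpa using contDiff_momentIntegral n (m := 0)
      fun i hi => iteratedDeriv_succ' (f := f) ▸ hdiff (i + 1) (by omega)
end

section
/- Every block-symmetric polynomial in the d·n variables X_{j,i} (j = 1,…,d; i = 1,…,n) over ℝ lies in the ℝ-subalgebra generated by the polarized power sums p_𝐩 := ∑_{i=1}^n ∏_{j=1}^d X_{j,i}^{p_j}, where 𝐩 = (p₁,…,p_d) ranges over the multi-indices in ℕ₀^d with 1 ≤ p₁+…+p_d ≤ n. -/
/-!
Averaging over the column permutations (possible in characteristic zero) writes a block-symmetric
polynomial as a combination of sums `∑_{f : ι ↪ ι} ∏ᵢ ∏ⱼ X_{j, f i}^{u i j}` over injections.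
Multiplying a power sum `p_v` by such a sum over injections of `Fin k` gives the sum over
injections of `Fin (k + 1)` plus sums over injections of `Fin k` in which `v` is merged into one
column, so by induction on `k` all of them lie in the algebra generated by *all* polarized power
sums. To remove the bound `|𝐩| ≤ n`, Newton's identities give the one-row power sums `p_{k eᵦ}`
for every `k`, and the polarization derivation `D_{ab} = ∑ᵢ X_{a,i} ∂/∂X_{b,i}` preserves the
algebra and sends `p_{𝐩 + eᵦ}` to `(𝐩_b + 1) p_{𝐩 + eₐ}`, which moves the exponent from row `b`
to any other row one unit at a time.
-/

open MvPolynomial Finset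

theorem Pi.exists_eq_add_single_one {ρ : Type*} [DecidableEq ρ] {p : ρ → ℕ} {b : ρ}
    (h : p b ≠ 0) : ∃ q : ρ → ℕ, p = q + Pi.single b 1 :=
  ⟨p - Pi.single b 1, by
    ext j
    by_cases hj : j = b
    · subst hj; simp; omega
    · simp [hj]⟩

theorem Pi.sum_add_single_one {ρ : Type*} [Fintype ρ] [DecidableEq ρ] (p : ρ → ℕ) (a : ρ) :
    ∑ j, (p + Pi.single a 1 : ρ → ℕ) j = ∑ j, p j + 1 := by
  simp [sum_add_distrib]

theorem Function.Embedding.sum_eq_sum_comp_add_sum_notMem_range {κ ι M : Type*} [Fintype κ]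
    [Fintype ι] [DecidableEq ι] [AddCommMonoid M] (g : κ ↪ ι) (φ : ι → M) :
    ∑ i, φ i = ∑ t, φ (g t) + ∑ i : {i // i ∉ Set.range g}, φ i := by
  rw [← Fintype.sum_subtype_add_sum_subtype (· ∈ Set.range g) φ]
  congr 1
  convert (Equiv.ofInjective g g.injective).sum_comp (fun i => φ i) |>.symm
  rfl

theorem Derivation.apply_mem_adjoin {R A : Type*} [CommSemiring R] [CommSemiring A] [Algebra R A]
    (D : Derivation R A A) {s : Set A} (hs : ∀ x ∈ s, D x ∈ Algebra.adjoin R s) {x : A}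
    (hx : x ∈ Algebra.adjoin R s) : D x ∈ Algebra.adjoin R s := by
  induction hx using Algebra.adjoin_induction with
  | mem x hx => exact hs x hx
  | algebraMap r => simp
  | add x y _ _ hx hy => simpa using add_mem hx hy
  | mul x y hx' hy' hx hy =>
    rw [D.leibniz]
    exact add_mem (mul_mem hx' hy) (mul_mem hy' hx)

noncomputable section

namespace MvPolynomial

section Newton

variable (σ : Type*) [Fintype σ]

theorem esymm_eq_zero_of_card_lt {R : Type*} [CommSemiring R] {k : ℕ}
    (hk : Fintype.card σ < k) : esymm σ R k = 0 := by
  rw [esymm, powersetCard_eq_empty.mpr (by simpa using hk), sum_empty]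

variable (K : Type*) [Field K] [CharZero K]

theorem esymm_mem_adjoin_psum (k : ℕ) :
    esymm σ K k ∈ Algebra.adjoin K (psum σ K '' Set.Icc 1 (Fintype.card σ)) := by
  induction k using Nat.strong_induction_on with
  | _ k ih =>
  set A := Algebra.adjoin K (psum σ K '' Set.Icc 1 (Fintype.card σ))
  rcases lt_or_ge (Fintype.card σ) k with hk | hk
  · rw [esymm_eq_zero_of_card_lt σ hk]
    exact zero_mem A
  rcases Nat.eq_zero_or_pos k with rfl | hk0
  · rw [esymm_zero]
    exact one_mem A
  have hnewton : (k : K) • esymm σ K k ∈ A := by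
    rw [Nat.cast_smul_eq_nsmul, nsmul_eq_mul, mul_esymm_eq_sum]
    refine mul_mem (pow_mem (neg_mem (one_mem A)) _) (sum_mem fun a ha => ?_)
    rw [mem_filter, HasAntidiagonal.mem_antidiagonal] at ha
    refine mul_mem (mul_mem (pow_mem (neg_mem (one_mem A)) _) (ih a.1 ha.2)) ?_
    exact Algebra.subset_adjoin ⟨a.2, ⟨by omega, by omega⟩, rfl⟩
  exact (Submodule.smul_mem_iff A.toSubmodule (Nat.cast_ne_zero.mpr hk0.ne')).mp hnewton

theorem psum_mem_adjoin_psum (k : ℕ) :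
    psum σ K k ∈ Algebra.adjoin K (psum σ K '' Set.Icc 1 (Fintype.card σ)) := by
  induction k using Nat.strong_induction_on with
  | _ k ih =>
  set A := Algebra.adjoin K (psum σ K '' Set.Icc 1 (Fintype.card σ))
  rcases Nat.eq_zero_or_pos k with rfl | hk0
  · rw [psum_zero]
    exact A.algebraMap_mem _
  rcases le_or_gt k (Fintype.card σ) with hk | hk
  · exact Algebra.subset_adjoin ⟨k, ⟨hk0, hk⟩, rfl⟩
  rw [psum_eq_mul_esymm_sub_sum σ K k hk0, esymm_eq_zero_of_card_lt σ hk, mul_zero, zero_sub]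
  refine neg_mem (sum_mem fun a ha => ?_)
  rw [mem_filter, HasAntidiagonal.mem_antidiagonal, Set.mem_Ioo] at ha
  exact mul_mem (mul_mem (pow_mem (neg_mem (one_mem A)) _) (esymm_mem_adjoin_psum σ K _))
    (ih a.2 (by omega))

end Newton

section Columns

variable {ρ ι : Type*} [Fintype ρ] (R : Type*) [CommSemiring R]

def columnExponent (p : ρ → ℕ) (i : ι) : ρ × ι →₀ ℕ :=
  ∑ j, Finsupp.single (j, i) (p j)

theorem columnExponent_add (p q : ρ → ℕ) (i : ι) :
    columnExponent (p + q) i = columnExponent p i + columnExponent q i := by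
  simp [columnExponent, Finsupp.single_add, sum_add_distrib]

theorem columnExponent_single [DecidableEq ρ] (a : ρ) (m : ℕ) (i : ι) :
    columnExponent (Pi.single a m) i = Finsupp.single (a, i) m :=
  (Fintype.sum_eq_single a fun j hj => by simp [hj]).trans (by simp)

theorem columnExponent_apply_self (p : ρ → ℕ) (i : ι) (j : ρ) :
    columnExponent p i (j, i) = p j := by
  classical
  simp [columnExponent, Finsupp.single_apply]

theorem columnExponent_apply_of_ne (p : ρ → ℕ) {i i' : ι} (h : i ≠ i') (j : ρ) :
    columnExponent p i (j, i') = 0 := by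
  classical
  simp [columnExponent, h]

def columnMonomial (p : ρ → ℕ) (i : ι) : MvPolynomial (ρ × ι) R :=
  ∏ j, X (j, i) ^ p j

theorem columnMonomial_eq_monomial (p : ρ → ℕ) (i : ι) :
    columnMonomial R p i = monomial (columnExponent p i) 1 := by
  simp only [columnMonomial, columnExponent, X_pow_eq_monomial, monomial_sum_one]

theorem columnMonomial_zero (i : ι) : columnMonomial R (0 : ρ → ℕ) i = 1 := by
  simp [columnMonomial]

theorem columnMonomial_add (p q : ρ → ℕ) (i : ι) :
    columnMonomial R (p + q) i = columnMonomial R p i * columnMonomial R q i := by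
  simp only [columnMonomial, Pi.add_apply, pow_add, prod_mul_distrib]

theorem prod_columnMonomial_add_single {κ : Type*} [Fintype κ] [DecidableEq κ]
    (u : κ → ρ → ℕ) (v : ρ → ℕ) (t : κ) (g : κ → ι) :
    ∏ s, columnMonomial R ((u + Pi.single t v : κ → ρ → ℕ) s) (g s)
      = columnMonomial R v (g t) * ∏ s, columnMonomial R (u s) (g s) := by
  simp only [Pi.add_apply, columnMonomial_add, prod_mul_distrib]
  rw [mul_comm, Fintype.prod_eq_single t fun s hs => by simp [hs, columnMonomial_zero]]
  simp

theorem monomial_one_eq_prod_columnMonomial [Fintype ι] (m : ρ × ι →₀ ℕ) :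
    monomial m (1 : R) = ∏ i, columnMonomial R (fun j => m (j, i)) i := by
  rw [monomial_eq, C_1, one_mul, Finsupp.prod_fintype _ _ fun _ => pow_zero _,
    Fintype.prod_prod_type, prod_comm]
  rfl

theorem rename_columnMonomial (π : Equiv.Perm ι) (p : ρ → ℕ) (i : ι) :
    rename (fun q : ρ × ι => (q.1, π q.2)) (columnMonomial R p i) = columnMonomial R p (π i) := by
  simp [columnMonomial, map_prod]

theorem pderiv_columnMonomial_of_ne (p : ρ → ℕ) {i i' : ι} (h : i ≠ i') (b : ρ) :
    pderiv (b, i') (columnMonomial R p i) = 0 := by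
  simp [columnMonomial_eq_monomial, columnExponent_apply_of_ne p h]

theorem pderiv_columnMonomial_of_eq_zero {p : ρ → ℕ} {b : ρ} (h : p b = 0) (i : ι) :
    pderiv (b, i) (columnMonomial R p i) = 0 := by
  simp [columnMonomial_eq_monomial, columnExponent_apply_self, h]

theorem X_mul_pderiv_columnMonomial_add_single [DecidableEq ρ] (p : ρ → ℕ) (a b : ρ) (i : ι) :
    X (a, i) * pderiv (b, i) (columnMonomial R (p + Pi.single b 1) i)
      = (p b + 1) • columnMonomial R (p + Pi.single a 1) i := by
  simp only [columnMonomial_eq_monomial, pderiv_monomial, columnExponent_add,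
    columnExponent_single, add_tsub_cancel_right, X, monomial_mul, smul_monomial]
  simp [columnExponent_apply_self, add_comm]

end Columns

section Polarization

variable {ρ : Type*} (ι : Type*) [Fintype ι] (R : Type*) [CommSemiring R]

def polarization (a b : ρ) : Derivation R (MvPolynomial (ρ × ι) R) (MvPolynomial (ρ × ι) R) :=
  ∑ i : ι, (X (a, i) : MvPolynomial (ρ × ι) R) • pderiv (b, i)

theorem polarization_apply (a b : ρ) (f : MvPolynomial (ρ × ι) R) :
    polarization ι R a b f = ∑ i, X (a, i) * pderiv (b, i) f := by
  rw [polarization, ← Derivation.coeFnAddMonoidHom_apply, map_sum, Finset.sum_apply]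
  rfl

end Polarization

section PowerSums

variable {ρ : Type*} [Fintype ρ] (ι : Type*) [Fintype ι] (R : Type*) [CommSemiring R]

def polarizedPowerSum (p : ρ → ℕ) : MvPolynomial (ρ × ι) R :=
  ∑ i, columnMonomial R p i

theorem polarizedPowerSum_zero : polarizedPowerSum ι R (0 : ρ → ℕ) = Fintype.card ι := by
  simp [polarizedPowerSum, columnMonomial_zero]

theorem rename_psum_eq_polarizedPowerSum_single [DecidableEq ρ] (b : ρ) (m : ℕ) :
    rename (fun i => (b, i)) (psum ι R m) = polarizedPowerSum ι R (Pi.single b m) := by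
  rw [psum, map_sum]
  refine sum_congr rfl fun i _ => ?_
  rw [map_pow, rename_X, columnMonomial, Fintype.prod_eq_single b fun j hj => by simp [hj]]
  simp

theorem polarization_polarizedPowerSum (a b : ρ) (p : ρ → ℕ) :
    polarization ι R a b (polarizedPowerSum ι R p)
      = ∑ i, X (a, i) * pderiv (b, i) (columnMonomial R p i) := by
  simp only [polarization_apply, polarizedPowerSum, map_sum]
  rw [sum_comm]
  refine sum_congr rfl fun i _ => Fintype.sum_eq_single i fun i' hi' => ?_
  rw [pderiv_columnMonomial_of_ne R p hi', mul_zero]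

theorem polarization_polarizedPowerSum_add_single [DecidableEq ρ] (a b : ρ) (p : ρ → ℕ) :
    polarization ι R a b (polarizedPowerSum ι R (p + Pi.single b 1))
      = (p b + 1) • polarizedPowerSum ι R (p + Pi.single a 1) := by
  rw [polarization_polarizedPowerSum, polarizedPowerSum, smul_sum]
  simp only [X_mul_pderiv_columnMonomial_add_single]

theorem polarization_polarizedPowerSum_of_eq_zero (a : ρ) {b : ρ} {p : ρ → ℕ} (h : p b = 0) :
    polarization ι R a b (polarizedPowerSum ι R p) = 0 := by
  simp [polarization_polarizedPowerSum, pderiv_columnMonomial_of_eq_zero R h]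

def polarizedPowerSumAlgebra : Subalgebra R (MvPolynomial (ρ × ι) R) :=
  Algebra.adjoin R {q | ∃ p : ρ → ℕ, 1 ≤ ∑ j, p j ∧ ∑ j, p j ≤ Fintype.card ι ∧
    q = polarizedPowerSum ι R p}

local notation "𝒜" => polarizedPowerSumAlgebra ι R

theorem polarizedPowerSum_mem_of_le {p : ρ → ℕ} (h1 : 1 ≤ ∑ j, p j)
    (h2 : ∑ j, p j ≤ Fintype.card ι) : polarizedPowerSum ι R p ∈ 𝒜 :=
  Algebra.subset_adjoin ⟨p, h1, h2, rfl⟩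

theorem polarization_mem [DecidableEq ρ] {a b : ρ} {f : MvPolynomial (ρ × ι) R} (hf : f ∈ 𝒜) :
    polarization ι R a b f ∈ 𝒜 := by
  refine Derivation.apply_mem_adjoin _ (fun x hx => ?_) hf
  obtain ⟨p, h1, h2, rfl⟩ := hx
  by_cases hb : p b = 0
  · rw [polarization_polarizedPowerSum_of_eq_zero ι R a hb]
    exact zero_mem _
  obtain ⟨q, rfl⟩ := Pi.exists_eq_add_single_one hb
  have hsum : ∑ j, (q + Pi.single a 1 : ρ → ℕ) j = ∑ j, (q + Pi.single b 1 : ρ → ℕ) j := by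
    simp only [Pi.sum_add_single_one]
  rw [polarization_polarizedPowerSum_add_single]
  exact Subalgebra.nsmul_mem _ (polarizedPowerSum_mem_of_le ι R (hsum ▸ h1) (hsum ▸ h2)) _

-- The name is from symmetric functions: for `κ = ι` this is the orbit sum of
-- `∏ₜ columnMonomial R (u t) t` times the order of its stabilizer.
def augmentedMonomial {κ : Type*} [Fintype κ] [DecidableEq κ] (u : κ → ρ → ℕ) :
    MvPolynomial (ρ × ι) R :=
  ∑ f : κ ↪ ι, ∏ t, columnMonomial R (u t) (f t)

theorem augmentedMonomial_of_isEmpty {κ : Type*} [Fintype κ] [DecidableEq κ] [IsEmpty κ]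
    (u : κ → ρ → ℕ) : augmentedMonomial ι R u = 1 := by
  simp [augmentedMonomial]

theorem augmentedMonomial_comp_equiv {κ κ' : Type*} [Fintype κ] [DecidableEq κ] [Fintype κ']
    [DecidableEq κ'] (e : κ' ≃ κ) (u : κ → ρ → ℕ) :
    augmentedMonomial ι R (u ∘ e) = augmentedMonomial ι R u := by
  refine Fintype.sum_equiv (e.embeddingCongr (Equiv.refl ι)) _ _ fun f => ?_
  exact (Fintype.prod_equiv e _ _ fun t => by simp [Equiv.embeddingCongr_apply])

variable [DecidableEq ι]

theorem augmentedMonomial_cons {k : ℕ} (v : ρ → ℕ) (u : Fin k → ρ → ℕ) :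
    augmentedMonomial ι R (Fin.cons v u : Fin (k + 1) → ρ → ℕ)
      = ∑ g : Fin k ↪ ι, ∑ i : {i // i ∉ Set.range g},
          columnMonomial R v i.1 * ∏ t, columnMonomial R (u t) (g t) := by
  rw [augmentedMonomial, ← (Equiv.embeddingFinSucc k ι).symm.sum_comp, Fintype.sum_sigma]
  simp [Fin.prod_univ_succ]

theorem polarizedPowerSum_mul_augmentedMonomial {k : ℕ} (v : ρ → ℕ) (u : Fin k → ρ → ℕ) :
    polarizedPowerSum ι R v * augmentedMonomial ι R u
      = augmentedMonomial ι R (Fin.cons v u : Fin (k + 1) → ρ → ℕ)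
        + ∑ t, augmentedMonomial ι R (u + Pi.single t v) := by
  rw [polarizedPowerSum, augmentedMonomial, sum_mul_sum, sum_comm, augmentedMonomial_cons]
  simp only [augmentedMonomial, prod_columnMonomial_add_single]
  rw [sum_comm (s := univ (α := Fin k)), ← sum_add_distrib]
  refine sum_congr rfl fun g _ => ?_
  rw [g.sum_eq_sum_comp_add_sum_notMem_range, add_comm]

theorem sum_rename_perm_monomial_one (m : ρ × ι →₀ ℕ) :
    ∑ π : Equiv.Perm ι, rename (fun q : ρ × ι => (q.1, π q.2)) (monomial m (1 : R))
      = augmentedMonomial ι R (fun i j => m (j, i)) := by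
  simp only [monomial_one_eq_prod_columnMonomial, map_prod, rename_columnMonomial]
  exact Fintype.sum_equiv (Equiv.embeddingEquivOfFinite ι).symm _ _ fun _ => rfl

end PowerSums

section Membership

variable {ρ : Type*} [Fintype ρ] [DecidableEq ρ] (ι : Type*) [Fintype ι]
  (K : Type*) [Field K] [CharZero K]

local notation "𝒜" => polarizedPowerSumAlgebra ι K

theorem polarizedPowerSum_add_single_mem_of_add_single_mem {a b : ρ} {p : ρ → ℕ}
    (h : polarizedPowerSum ι K (p + Pi.single b 1) ∈ 𝒜) :
    polarizedPowerSum ι K (p + Pi.single a 1) ∈ 𝒜 := by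
  have hD := polarization_mem ι K (a := a) (b := b) h
  rw [polarization_polarizedPowerSum_add_single, ← Nat.cast_smul_eq_nsmul K] at hD
  exact (Submodule.smul_mem_iff (𝒜).toSubmodule (Nat.cast_ne_zero.mpr (p b).succ_ne_zero)).mp hD

theorem polarizedPowerSum_single_mem (b : ρ) (m : ℕ) :
    polarizedPowerSum ι K (Pi.single b m) ∈ 𝒜 := by
  have hle : Algebra.adjoin K (psum ι K '' Set.Icc 1 (Fintype.card ι)) ≤
      (𝒜).comap (rename fun i => (b, i)) := by
    rw [Algebra.adjoin_le_iff]
    rintro _ ⟨k, hk, rfl⟩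
    rw [SetLike.mem_coe, Subalgebra.mem_comap, rename_psum_eq_polarizedPowerSum_single]
    exact polarizedPowerSum_mem_of_le ι K (by simpa using hk.1) (by simpa using hk.2)
  simpa [rename_psum_eq_polarizedPowerSum_single] using hle (psum_mem_adjoin_psum ι K m)

theorem polarizedPowerSum_add_single_mem (b : ρ) (p : ρ → ℕ) :
    polarizedPowerSum ι K (p + Pi.single b 1) ∈ 𝒜 := by
  suffices ∀ k (p : ρ → ℕ), ∑ j ∈ univ.erase b, p j = k →
      polarizedPowerSum ι K (p + Pi.single b 1) ∈ 𝒜 from this _ p rfl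
  intro k
  induction k with
  | zero =>
    intro p hp
    have hsingle : p + Pi.single b 1 = Pi.single b (p b + 1) := by
      ext j
      by_cases hj : j = b
      · subst hj; simp
      · simp [hj, (sum_eq_zero_iff.mp hp) j (mem_erase.mpr ⟨hj, mem_univ j⟩)]
    rw [hsingle]
    exact polarizedPowerSum_single_mem ι K b _
  | succ k ih =>
    intro p hp
    obtain ⟨a, ha, hpa⟩ : ∃ a ∈ univ.erase b, p a ≠ 0 := by
      by_contra! h
      rw [sum_eq_zero h] at hp
      exact k.succ_ne_zero hp.symm
    obtain ⟨q, rfl⟩ := Pi.exists_eq_add_single_one hpa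
    have hk : ∑ j ∈ univ.erase b, (q + Pi.single b 1 : ρ → ℕ) j = k := by
      simpa [sum_add_distrib, sum_pi_single', ha] using hp
    rw [add_right_comm]
    exact polarizedPowerSum_add_single_mem_of_add_single_mem ι K (ih _ hk)

theorem polarizedPowerSum_mem (p : ρ → ℕ) : polarizedPowerSum ι K p ∈ 𝒜 := by
  by_cases hp : p = 0
  · rw [hp, polarizedPowerSum_zero]
    exact natCast_mem _ _
  obtain ⟨b, hb⟩ := Function.ne_iff.mp hp
  obtain ⟨q, rfl⟩ := Pi.exists_eq_add_single_one hb
  exact polarizedPowerSum_add_single_mem ι K b q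

variable [DecidableEq ι]

theorem augmentedMonomial_fin_mem {k : ℕ} (u : Fin k → ρ → ℕ) : augmentedMonomial ι K u ∈ 𝒜 := by
  induction k with
  | zero =>
    rw [augmentedMonomial_of_isEmpty]
    exact one_mem _
  | succ k ih =>
    rw [← Fin.cons_self_tail u,
      eq_sub_of_add_eq (polarizedPowerSum_mul_augmentedMonomial ι K (u 0) (Fin.tail u)).symm]
    exact sub_mem (mul_mem (polarizedPowerSum_mem ι K _) (ih _)) (sum_mem fun t _ => ih _)

theorem augmentedMonomial_mem {κ : Type*} [Fintype κ] [DecidableEq κ] (u : κ → ρ → ℕ) :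
    augmentedMonomial ι K u ∈ 𝒜 := by
  rw [← augmentedMonomial_comp_equiv ι K (Fintype.equivFin κ).symm u]
  exact augmentedMonomial_fin_mem ι K _

theorem sum_rename_perm_mem (P : MvPolynomial (ρ × ι) K) :
    ∑ π : Equiv.Perm ι, rename (fun q : ρ × ι => (q.1, π q.2)) P ∈ 𝒜 := by
  induction P using MvPolynomial.induction_on' with
  | monomial m c =>
    rw [← mul_one c, ← smul_eq_mul, ← smul_monomial]
    simp only [map_smul, ← smul_sum, sum_rename_perm_monomial_one]
    exact Subalgebra.smul_mem _ (augmentedMonomial_mem ι K _) c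
  | add P Q hP hQ =>
    simpa only [map_add, sum_add_distrib] using add_mem hP hQ

theorem mem_polarizedPowerSumAlgebra_of_forall_rename_eq (P : MvPolynomial (ρ × ι) K)
    (hP : ∀ π : Equiv.Perm ι, rename (fun q : ρ × ι => (q.1, π q.2)) P = P) : P ∈ 𝒜 := by
  have h := sum_rename_perm_mem ι K P
  simp only [hP, sum_const, card_univ, Fintype.card_perm, ← Nat.cast_smul_eq_nsmul K] at h
  exact (Submodule.smul_mem_iff (𝒜).toSubmodule
    (Nat.cast_ne_zero.mpr (Nat.factorial_ne_zero _))).mp h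

end Membership

end MvPolynomial

end

/-- Every block-symmetric polynomial in the `d·n` variables `X_{j,i}` lies in the
ℝ-subalgebra generated by the polarized power sums
`p_𝐩 = ∑ᵢ ∏ⱼ X_{j,i}^{pⱼ}` with `1 ≤ |𝐩| ≤ n`. -/
theorem blocksymmetric_polynomial_polarized_powersum_basis (d n : ℕ)
    (P : MvPolynomial (Fin d × Fin n) ℝ)
    (hsym : ∀ π : Equiv.Perm (Fin n),
      MvPolynomial.rename (fun q : Fin d × Fin n => (q.1, π q.2)) P = P) :
    P ∈ Algebra.adjoin ℝ
      {q : MvPolynomial (Fin d × Fin n) ℝ | ∃ p : Fin d → ℕ,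
        (1 ≤ ∑ j, p j) ∧ (∑ j, p j ≤ n) ∧
        q = ∑ i : Fin n, ∏ j : Fin d, MvPolynomial.X (j, i) ^ p j} := by
  simpa [polarizedPowerSumAlgebra, polarizedPowerSum, columnMonomial] using
    mem_polarizedPowerSumAlgebra_of_forall_rename_eq (Fin n) ℝ P hsym
end

section
/- For every continuous antisymmetric function ψ : ℝⁿ → ℝ there exist continuous functions φ₁,…,φₙ : ℝⁿ → ℝ, each with φᵢ(x_j | x_{≠j}) symmetric in x_{≠j}, such that ψ(x) = det Φ(x) for all x ∈ ℝⁿ, where Φ(x)_{j,i} := φᵢ(x_j | x_{≠j}); i.e., in one dimension, continuous antisymmetric functions admit continuous generalized Slater determinant representations. -/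
/-!
Multiplying `ψ` by the sign of the Vandermonde determinant `∏_{i<j} (x_j - x_i)` gives a
symmetric function `S`, equal to `ψ` on sorted tuples and continuous because `ψ` vanishes
wherever that sign jumps. Put `φ_i(x_j | x_{≠j}) := c_i(S(x))` when `x_j` has exactly `i`
coordinates below it, and `0` otherwise, where `c_0(s) = sign(s) |s|^{1/n}` and
`c_i(s) = |s|^{1/n}` for `i > 0`. For distinct coordinates `Φ(x)` is the diagonal matrix
`diag(c_i(S(x)))` with rows permuted by the ranking permutation `τ`, so
`det Φ(x) = sign τ · S(x) = sign τ · ψ(x ∘ τ⁻¹) = ψ(x)`; with a repeated coordinate two rows of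
`Φ(x)` coincide and `ψ(x) = 0`. Across a tie `x_j = x_k` the rank of `x_j` jumps, but there
`S = 0` and every `c_i` vanishes at `0`, so the `φ_i` stay continuous.
-/

open Finset Filter Topology

theorem Continuous.mul_of_bounded_of_continuousAt_of_ne_zero {X R : Type*} [TopologicalSpace X]
    [NonUnitalSeminormedRing R] {f g : X → R} (hf : Continuous f) {C : ℝ}
    (hg : ∀ x, ‖g x‖ ≤ C) (hfg : ∀ x, f x ≠ 0 → ContinuousAt g x) :
    Continuous fun x => f x * g x := by
  refine continuous_iff_continuousAt.2 fun x => ?_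
  by_cases hx : f x = 0
  · have hf0 : Tendsto f (𝓝 x) (𝓝 0) := hx ▸ hf.continuousAt
    simpa [ContinuousAt, hx] using
      hf0.zero_mul_isBoundedUnder_le (isBoundedUnder_of ⟨C, fun y => hg y⟩)
  · exact hf.continuousAt.mul (hfg x hx)

theorem norm_coe_sign_le_one {α : Type*} [Zero α] [LinearOrder α] (a : α) :
    ‖(SignType.sign a : ℝ)‖ ≤ 1 := by
  rcases SignType.trichotomy (SignType.sign a) with h | h | h <;> simp [h]

theorem continuousAt_coe_sign_of_ne_zero {α : Type*} [Zero α] [LinearOrder α]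
    [TopologicalSpace α] [OrderTopology α] {a : α} (ha : a ≠ 0) :
    ContinuousAt (fun x : α => (SignType.sign x : ℝ)) a :=
  (continuous_of_discreteTopology (f := ((↑) : SignType → ℝ))).continuousAt.comp
    (continuousAt_sign_of_ne_zero ha)

namespace Matrix

theorem det_vandermonde_comp_perm_s11 {R : Type*} [CommRing R] {n : ℕ} (x : Fin n → R)
    (σ : Equiv.Perm (Fin n)) :
    (vandermonde (x ∘ σ)).det = Equiv.Perm.sign σ * (vandermonde x).det :=
  det_permute σ (vandermonde x)

theorem det_vandermonde_pos_of_strictMono {R : Type*} [CommRing R] [LinearOrder R]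
    [IsStrictOrderedRing R] {n : ℕ} {x : Fin n → R} (hx : StrictMono x) :
    0 < (vandermonde x).det := by
  rw [det_vandermonde]
  exact prod_pos fun i _ => prod_pos fun j hj => sub_pos.2 (hx (mem_Ioi.1 hj))

theorem continuous_det_vandermonde (R : Type*) [CommRing R] [TopologicalSpace R]
    [IsTopologicalRing R] (n : ℕ) : Continuous fun x : Fin n → R => (vandermonde x).det := by
  simp only [det_vandermonde]
  fun_prop

theorem det_of_ite_perm_apply_eq {R n : Type*} [CommRing R] [Fintype n] [DecidableEq n]
    (τ : Equiv.Perm n) (d : n → R) :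
    (of fun j i => if τ j = i then d i else 0).det = Equiv.Perm.sign τ * ∏ i, d i := by
  have hmat : (of fun j i => if τ j = i then d i else 0) = (diagonal d).submatrix τ id := by
    ext j i
    by_cases h : τ j = i <;> simp [h]
  rw [hmat, det_permute, det_diagonal]

end Matrix

theorem Fin.cons_comp_decomposeFin_symm {α : Type*} {m : ℕ} (t : α) (y : Fin m → α)
    (π : Equiv.Perm (Fin m)) :
    (Fin.cons t y : Fin (m + 1) → α) ∘ Equiv.Perm.decomposeFin.symm (0, π) =
      Fin.cons t (y ∘ π) := by
  ext k
  cases k using Fin.cases <;> simp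

namespace Tuple

section Rank

variable {ι α : Type*} [Fintype ι] [LinearOrder α]

def rank (x : ι → α) (j : ι) : ℕ := #{a | x a < x j}

theorem rank_lt_rank {x : ι → α} {a b : ι} (h : x a < x b) : rank x a < rank x b := by
  refine card_lt_card ⟨fun c hc => ?_, fun hsub => ?_⟩
  · simp only [mem_filter, mem_univ, true_and] at hc ⊢
    exact hc.trans h
  · simpa using hsub (by simpa using h : a ∈ ({c | x c < x b} : Finset ι))

theorem lt_of_rank_lt {x : ι → α} {a b : ι} (h : rank x a < rank x b) : x a < x b := by
  by_contra hba
  refine h.not_ge (card_le_card fun c hc => ?_)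
  simp only [mem_filter, mem_univ, true_and] at hc ⊢
  exact hc.trans_le (not_lt.1 hba)

theorem rank_injective {x : ι → α} (hx : Function.Injective x) :
    Function.Injective (rank x) := fun _ _ h =>
  hx <| le_antisymm (not_lt.1 fun hba => (rank_lt_rank hba).ne' h)
    (not_lt.1 fun hab => (rank_lt_rank hab).ne h)

theorem rank_lt_card (x : ι → α) (j : ι) : rank x j < Fintype.card ι :=
  card_lt_card (filter_ssubset.2 ⟨j, mem_univ j, lt_irrefl _⟩)

theorem rank_comp_perm [DecidableEq ι] (x : ι → α) (σ : Equiv.Perm ι) (j : ι) :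
    rank (x ∘ σ) j = rank x (σ j) :=
  card_equiv σ (by simp)

theorem eventually_rank_eq [TopologicalSpace α] [OrderTopology α] {x : ι → α} {j : ι}
    (hx : ∀ a ≠ j, x a ≠ x j) : ∀ᶠ w in 𝓝 x, rank w j = rank x j := by
  have hcmp : ∀ a, ∀ᶠ w : ι → α in 𝓝 x, (w a < w j ↔ x a < x j) := fun a => by
    rcases eq_or_ne a j with rfl | ha
    · exact .of_forall fun w => iff_of_false (lt_irrefl _) (lt_irrefl _)
    rcases (hx a ha).lt_or_gt with h | h
    · filter_upwards [(continuous_apply a).continuousAt.eventually_lt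
        (continuous_apply j).continuousAt h] with w hw using iff_of_true hw h
    · filter_upwards [(continuous_apply j).continuousAt.eventually_lt
        (continuous_apply a).continuousAt h] with w hw using iff_of_false hw.not_gt h.not_gt
  filter_upwards [eventually_all.2 hcmp] with w hw
  exact congrArg card (filter_congr fun a _ => hw a)

end Rank

section RankPerm

variable {α : Type*} [LinearOrder α] {n : ℕ}

noncomputable def rankPerm {x : Fin n → α} (hx : Function.Injective x) : Equiv.Perm (Fin n) :=
  Equiv.ofBijective (fun j => ⟨rank x j, by simpa using rank_lt_card x j⟩)
    (Finite.injective_iff_bijective.1 fun _ _ h => rank_injective hx (Fin.val_eq_of_eq h))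

@[simp]
theorem val_rankPerm_apply {x : Fin n → α} (hx : Function.Injective x) (j : Fin n) :
    (rankPerm hx j : ℕ) = rank x j := rfl

theorem strictMono_comp_rankPerm_symm {x : Fin n → α} (hx : Function.Injective x) :
    StrictMono (x ∘ (rankPerm hx).symm) := fun i i' h =>
  lt_of_rank_lt (x := x) <| by
    rwa [← val_rankPerm_apply hx, ← val_rankPerm_apply hx, Equiv.apply_symm_apply,
      Equiv.apply_symm_apply]

end RankPerm

end Tuple

open Matrix Tuple

def IsAntisymmetricFun {ι α : Type*} [Fintype ι] [DecidableEq ι] (ψ : (ι → α) → ℝ) : Prop :=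
  ∀ π : Equiv.Perm ι, ∀ x : ι → α, ψ (x ∘ π) = ((Equiv.Perm.sign π : ℤ) : ℝ) * ψ x

theorem IsAntisymmetricFun.apply_eq_zero_of_not_injective {ι α : Type*} [Fintype ι]
    [DecidableEq ι] {ψ : (ι → α) → ℝ} (hψ : IsAntisymmetricFun ψ) {x : ι → α}
    (hx : ¬ Function.Injective x) : ψ x = 0 := by
  obtain ⟨a, b, hxab, hab⟩ := Function.not_injective_iff.1 hx
  have hswap : x ∘ Equiv.swap a b = x := by
    funext i
    rcases eq_or_ne i a with rfl | hia
    · simp [hxab]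
    rcases eq_or_ne i b with rfl | hib
    · simp [hxab]
    · simp [Equiv.swap_apply_of_ne_of_ne hia hib]
  have h := hψ (Equiv.swap a b) x
  rw [hswap, Equiv.Perm.sign_swap hab] at h
  push_cast at h
  linarith

/-- `ψ` evaluated at the increasing rearrangement of `x`, when `ψ` is antisymmetric. -/
noncomputable def signSymmetrize {n : ℕ} (ψ : (Fin n → ℝ) → ℝ) (x : Fin n → ℝ) : ℝ :=
  ψ x * SignType.sign (vandermonde x).det

section SignSymmetrize

variable {n : ℕ} {ψ : (Fin n → ℝ) → ℝ}

theorem signSymmetrize_eq_zero_of_not_injective {x : Fin n → ℝ} (hx : ¬ Function.Injective x) :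
    signSymmetrize ψ x = 0 := by
  rw [signSymmetrize, not_not.1 (mt det_vandermonde_ne_zero_iff.1 hx), sign_zero,
    SignType.coe_zero, mul_zero]

theorem signSymmetrize_of_strictMono {x : Fin n → ℝ} (hx : StrictMono x) :
    signSymmetrize ψ x = ψ x := by
  rw [signSymmetrize, sign_pos (det_vandermonde_pos_of_strictMono hx), SignType.coe_one, mul_one]

theorem IsAntisymmetricFun.signSymmetrize_comp_perm (hψ : IsAntisymmetricFun ψ)
    (x : Fin n → ℝ) (σ : Equiv.Perm (Fin n)) :
    signSymmetrize ψ (x ∘ σ) = signSymmetrize ψ x := by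
  rw [signSymmetrize, signSymmetrize, hψ, det_vandermonde_comp_perm_s11]
  rcases Int.units_eq_one_or (Equiv.Perm.sign σ) with h | h <;> simp [h, Left.sign_neg]

theorem IsAntisymmetricFun.continuous_signSymmetrize (hψ : IsAntisymmetricFun ψ)
    (hcont : Continuous ψ) : Continuous (signSymmetrize ψ) :=
  hcont.mul_of_bounded_of_continuousAt_of_ne_zero (fun _ => norm_coe_sign_le_one _) fun _ hx =>
    (continuousAt_coe_sign_of_ne_zero (det_vandermonde_ne_zero_iff.2
      (not_not.1 (mt hψ.apply_eq_zero_of_not_injective hx)))).comp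
      (f := fun x : Fin n → ℝ => (vandermonde x).det) (continuous_det_vandermonde ℝ n).continuousAt

end SignSymmetrize

noncomputable def slaterFactor (m : ℕ) (i : Fin (m + 1)) (s : ℝ) : ℝ :=
  |s| ^ ((m + 1 : ℕ) : ℝ)⁻¹ * if i = 0 then (SignType.sign s : ℝ) else 1

section SlaterFactor

variable {m : ℕ}

theorem slaterFactor_zero_right (i : Fin (m + 1)) : slaterFactor m i 0 = 0 := by
  rw [slaterFactor, abs_zero, Real.zero_rpow (by positivity), zero_mul]

theorem continuous_slaterFactor (i : Fin (m + 1)) : Continuous (slaterFactor m i) := by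
  refine (continuous_abs.rpow_const fun _ => Or.inr (by positivity))
    |>.mul_of_bounded_of_continuousAt_of_ne_zero (C := 1) (fun s => ?_) fun s hs => ?_
  · split_ifs
    exacts [norm_coe_sign_le_one s, norm_one.le]
  · have hs0 : s ≠ 0 := by
      rintro rfl
      exact hs (by rw [abs_zero, Real.zero_rpow (by positivity)])
    split_ifs
    exacts [continuousAt_coe_sign_of_ne_zero hs0, continuousAt_const]

theorem prod_slaterFactor (s : ℝ) : ∏ i, slaterFactor m i s = s := by
  have hroot : (|s| ^ ((m + 1 : ℕ) : ℝ)⁻¹) ^ (m + 1) = |s| :=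
    Real.rpow_inv_natCast_pow (abs_nonneg s) m.succ_ne_zero
  simp only [slaterFactor, Fin.prod_univ_succ, if_pos, Fin.succ_ne_zero, if_false, mul_one,
    prod_const, card_univ, Fintype.card_fin]
  calc |s| ^ ((m + 1 : ℕ) : ℝ)⁻¹ * (SignType.sign s : ℝ) * (|s| ^ ((m + 1 : ℕ) : ℝ)⁻¹) ^ m
      = SignType.sign s * (|s| ^ ((m + 1 : ℕ) : ℝ)⁻¹) ^ (m + 1) := by ring
    _ = s := by rw [hroot, sign_mul_abs]

end SlaterFactor

/-- The orbital `φ_i` evaluated at `(x 0 | x_{≠0})`. -/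
noncomputable def slaterEntry {m : ℕ} (ψ : (Fin (m + 1) → ℝ) → ℝ) (i : Fin (m + 1))
    (x : Fin (m + 1) → ℝ) : ℝ :=
  if rank x 0 = i then slaterFactor m i (signSymmetrize ψ x) else 0

section SlaterEntry

variable {m : ℕ} {ψ : (Fin (m + 1) → ℝ) → ℝ}

theorem IsAntisymmetricFun.slaterEntry_comp_perm (hψ : IsAntisymmetricFun ψ) (i : Fin (m + 1))
    (x : Fin (m + 1) → ℝ) (σ : Equiv.Perm (Fin (m + 1))) :
    slaterEntry ψ i (x ∘ σ) =
      if rank x (σ 0) = i then slaterFactor m i (signSymmetrize ψ x) else 0 := by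
  rw [slaterEntry, rank_comp_perm, hψ.signSymmetrize_comp_perm]

theorem IsAntisymmetricFun.continuous_slaterEntry (hψ : IsAntisymmetricFun ψ)
    (hcont : Continuous ψ) (i : Fin (m + 1)) : Continuous (slaterEntry ψ i) := by
  have hmul : slaterEntry ψ i =
      fun x => slaterFactor m i (signSymmetrize ψ x) * if rank x 0 = i then 1 else 0 :=
    funext fun x => (mul_boole _ _).symm
  rw [hmul]
  refine ((continuous_slaterFactor i).comp (hψ.continuous_signSymmetrize hcont))
    |>.mul_of_bounded_of_continuousAt_of_ne_zero (C := 1) (fun x => ?_) fun x hx => ?_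
  · split_ifs <;> simp
  · have hinj : Function.Injective x := by
      by_contra hx'
      exact hx (by simp [signSymmetrize_eq_zero_of_not_injective hx', slaterFactor_zero_right])
    refine (continuousAt_const (y := if rank x 0 = i then (1 : ℝ) else 0)).congr ?_
    filter_upwards [eventually_rank_eq fun a ha => hinj.ne ha] with w hw
    rw [hw]

theorem IsAntisymmetricFun.eq_det_slaterEntry (hψ : IsAntisymmetricFun ψ) (x : Fin (m + 1) → ℝ) :
    ψ x = (of fun j i => slaterEntry ψ i (Fin.cons (x j) fun k => x (j.succAbove k))).det := by
  have hentry : ∀ j i, slaterEntry ψ i (Fin.cons (x j) fun k => x (j.succAbove k)) =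
      if rank x j = i then slaterFactor m i (signSymmetrize ψ x) else 0 := fun j i => by
    rw [show (Fin.cons (x j) fun k => x (j.succAbove k) : Fin (m + 1) → ℝ) =
        x ∘ j.cycleRange.symm from Fin.cons_removeNth_eq_comp_cycleRange_symm x j,
      hψ.slaterEntry_comp_perm, Fin.cycleRange_symm_zero]
  simp only [hentry]
  by_cases hx : Function.Injective x
  · set τ := rankPerm hx
    have hrank : ∀ j (i : Fin (m + 1)), rank x j = (i : ℕ) ↔ τ j = i := fun j i => by
      rw [← val_rankPerm_apply hx, Fin.val_inj]
    have hsymm : signSymmetrize ψ x = ψ (x ∘ τ.symm) := by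
      rw [← signSymmetrize_of_strictMono (ψ := ψ) (strictMono_comp_rankPerm_symm hx),
        hψ.signSymmetrize_comp_perm]
    have hsort : ψ x = Equiv.Perm.sign τ * ψ (x ∘ τ.symm) := by
      rw [← hψ, Function.comp_assoc, Equiv.symm_comp_self, Function.comp_id]
    simp only [hrank]
    rw [det_of_ite_perm_apply_eq, prod_slaterFactor, hsymm, hsort]
  · obtain ⟨a, b, hxab, hab⟩ := Function.not_injective_iff.1 hx
    rw [hψ.apply_eq_zero_of_not_injective hx, eq_comm]
    have hrank : rank x a = rank x b := by rw [Tuple.rank, Tuple.rank, hxab]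
    exact det_zero_of_row_eq hab (funext fun i => by simp only [of_apply, hrank])

end SlaterEntry

/-- Every continuous antisymmetric function `ψ : ℝⁿ → ℝ` (here `n = m+1 ≥ 1`) admits a
continuous generalized Slater determinant representation: `ψ(x) = det Φ(x)` with
`Φ(x)_{j,i} = φᵢ(x_j | x_{≠j})`, where each `φᵢ` is continuous and
`φᵢ(x_j | x_{≠j})` is symmetric in `x_{≠j}`. -/
theorem antisymmetric_continuous_slater (m : ℕ) (ψ : (Fin (m + 1) → ℝ) → ℝ)
    (hcont : Continuous ψ)
    (hanti : ∀ π : Equiv.Perm (Fin (m + 1)), ∀ x : Fin (m + 1) → ℝ,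
      ψ (x ∘ π) = ((Equiv.Perm.sign π : ℤ) : ℝ) * ψ x) :
    ∃ φ : Fin (m + 1) → ℝ × (Fin m → ℝ) → ℝ,
      (∀ i : Fin (m + 1), Continuous (φ i)) ∧
      (∀ i : Fin (m + 1), ∀ t : ℝ, ∀ π : Equiv.Perm (Fin m), ∀ y : Fin m → ℝ,
        φ i (t, y ∘ π) = φ i (t, y)) ∧
      ∀ x : Fin (m + 1) → ℝ,
        ψ x = Matrix.det (Matrix.of fun j i : Fin (m + 1) =>
          φ i (x j, fun k : Fin m => x (j.succAbove k))) := by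
  have hψ : IsAntisymmetricFun ψ := hanti
  refine ⟨fun i z => slaterEntry ψ i (Fin.cons z.1 z.2), fun i => ?_, fun i t π y => ?_,
    hψ.eq_det_slaterEntry⟩
  · exact (hψ.continuous_slaterEntry hcont i).comp
      (continuous_fst.finCons (A := fun _ => ℝ) continuous_snd)
  · show slaterEntry ψ i (Fin.cons t (y ∘ π)) = slaterEntry ψ i (Fin.cons t y)
    rw [← Fin.cons_comp_decomposeFin_symm, hψ.slaterEntry_comp_perm,
      Equiv.Perm.decomposeFin_symm_apply_zero, slaterEntry]
end

section
/- A function φ : (ℝ^d)ⁿ → (ℝ^{d'})ⁿ is permutation-equivariant, i.e. φ(x_{π(1)},…,x_{π(n)})_i = φ(x₁,…,xₙ)_{π(i)} for every permutation π of {1,…,n} and all inputs, if and only if there exists a function F : ℝ^d × (ℝ^d)^{n−1} → ℝ^{d'} that is invariant under every permutation of its last n−1 vector arguments such that φ(x₁,…,xₙ)_i = F(x_i, x_{≠i}) for all i and all (x₁,…,xₙ), where x_{≠i} := (x₁,…,x_{i−1},x_{i+1},…,xₙ). -/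
/-!
Equivariance pins `φ` down by its first output coordinate `F v Y := φ (Fin.cons v Y) 0`: moving
`xᵢ` to the front with the cycle `(0 1 … i)` turns `φ(X)ᵢ` into `F(xᵢ, x_{≠i})`, and permutations
fixing `0` make `F` symmetric in `Y`. Conversely, a permutation `π` carries the positions other
than `i` bijectively onto those other than `π i`, so `x_{≠π i}` is a rearrangement of the
list `(X ∘ π)_{≠i}`, which the symmetry of `F` absorbs.
-/

open Equiv Equiv.Perm

theorem Fin.exists_perm_comp_succAbove {n : ℕ} (π : Perm (Fin (n + 1))) (i : Fin (n + 1)) :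
    ∃ τ : Perm (Fin n), π ∘ i.succAbove = (π i).succAbove ∘ τ := by
  let e : { x // x ≠ i } ≃ { x // x ≠ π i } :=
    π.subtypeEquiv fun _ => π.injective.ne_iff.symm
  refine ⟨(finSuccAboveEquiv i).trans (e.trans (finSuccAboveEquiv (π i)).symm), funext fun k => ?_⟩
  exact congrArg Subtype.val
    ((finSuccAboveEquiv (π i)).apply_symm_apply (e (finSuccAboveEquiv i k))).symm

theorem Fin.cons_comp_decomposeFin_symm_zero {α : Type*} {n : ℕ} (v : α) (Y : Fin n → α)
    (π : Perm (Fin n)) :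
    (Fin.cons v Y : Fin (n + 1) → α) ∘ decomposeFin.symm (0, π) = Fin.cons v (Y ∘ π) := by
  ext j
  cases j using Fin.cases <;> simp

section

variable {α β : Type*} {m : ℕ}

theorem exists_symmetric_of_equivariant (φ : (Fin (m + 1) → α) → Fin (m + 1) → β)
    (hφ : ∀ (π : Perm (Fin (m + 1))) X, φ (X ∘ π) = φ X ∘ π) :
    ∃ F : α → (Fin m → α) → β, (∀ v (π : Perm (Fin m)) Y, F v (Y ∘ π) = F v Y) ∧
      ∀ X i, φ X i = F (X i) (i.removeNth X) := by
  refine ⟨fun v Y => φ (Fin.cons v Y) 0, fun v π Y => ?_, fun X i => ?_⟩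
  · dsimp only
    rw [← Fin.cons_comp_decomposeFin_symm_zero, hφ]
    simp
  · dsimp only
    rw [Fin.cons_removeNth_eq_comp_cycleRange_symm, hφ]
    simp

theorem equivariant_of_symmetric (F : α → (Fin m → α) → β)
    (hF : ∀ v (π : Perm (Fin m)) Y, F v (Y ∘ π) = F v Y)
    (φ : (Fin (m + 1) → α) → Fin (m + 1) → β) (hφ : ∀ X i, φ X i = F (X i) (i.removeNth X))
    (π : Perm (Fin (m + 1))) (X : Fin (m + 1) → α) : φ (X ∘ π) = φ X ∘ π := by
  ext1 i
  obtain ⟨τ, hτ⟩ := Fin.exists_perm_comp_succAbove π i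
  have hremove : i.removeNth (X ∘ π) = (π i).removeNth X ∘ τ :=
    congrArg (X ∘ ·) hτ
  rw [Function.comp_apply, hφ, hφ, hremove, hF]
  rfl

end

/-- A function `φ : (ℝ^d)ⁿ → (ℝ^{d'})ⁿ` (here `n = m+1 ≥ 1`) is permutation-equivariant
iff there is a function `F(x, x_{≠})` of one vector and `n-1` further vectors, invariant
under permutations of the latter, such that `φ(X)ᵢ = F(xᵢ, x_{≠i})` for all `i`. -/
theorem equivariant_iff_all_but_one_symmetric (d d' m : ℕ)
    (φ : (Fin (m + 1) → Fin d → ℝ) → (Fin (m + 1) → Fin d' → ℝ)) :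
    (∀ π : Equiv.Perm (Fin (m + 1)), ∀ X : Fin (m + 1) → Fin d → ℝ,
      φ (X ∘ π) = φ X ∘ π) ↔
    (∃ F : (Fin d → ℝ) → (Fin m → Fin d → ℝ) → (Fin d' → ℝ),
      (∀ v : Fin d → ℝ, ∀ π : Equiv.Perm (Fin m), ∀ Y : Fin m → Fin d → ℝ,
        F v (Y ∘ π) = F v Y) ∧
      ∀ X : Fin (m + 1) → Fin d → ℝ, ∀ i : Fin (m + 1),
        φ X i = F (X i) (fun k : Fin m => X (i.succAbove k))) :=
  ⟨exists_symmetric_of_equivariant φ,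
    fun ⟨F, hF, hφ⟩ => equivariant_of_symmetric F hF φ hφ⟩
end

section
/- Every continuous permutation-equivariant function f : (ℝ^d)ⁿ → (ℝ^{d'})ⁿ can be approximated uniformly on compacta by permutation-equivariant polynomial maps: for every ε > 0 and D > 0 there exists a map P : (ℝ^d)ⁿ → (ℝ^{d'})ⁿ, each of whose d'·n real components is a polynomial in the d·n coordinates, such that P is permutation-equivariant and max_i ‖f(X)_i − P(X)_i‖_∞ ≤ ε for all X ∈ ([−D,D]^d)ⁿ. -/
/-!
Approximate each output coordinate of `f` on the box by an arbitrary polynomial, using the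
Stone–Weierstrass theorem for the polynomial functions in the coordinates. Averaging the
conjugates `σ⁻¹ · P ∘ σ` over all permutations `σ` makes the approximant equivariant, and,
because `f` is equivariant and the box is permutation invariant, the average of the errors is
still at most `ε`.
-/

open MvPolynomial Equiv Finset Function
open scoped BigOperators

noncomputable def mvPolynomialFunctions (σ : Type*) : Subalgebra ℝ C(σ → ℝ, ℝ) :=
  (aeval fun i : σ => ContinuousMap.eval (X := fun _ => ℝ) i).range

theorem MvPolynomial.aeval_continuousMapEval_apply {σ : Type*} (p : MvPolynomial σ ℝ) (x : σ → ℝ) :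
    aeval (fun i : σ => ContinuousMap.eval (X := fun _ => ℝ) i) p x = eval x p := by
  rw [← ContinuousMap.evalAlgHom_apply (S := ℝ), comp_aeval_apply]
  rfl

theorem mvPolynomialFunctions_separatesPoints (σ : Type*) :
    (mvPolynomialFunctions σ).SeparatesPoints := by
  intro x y hxy
  obtain ⟨i, hi⟩ := Function.ne_iff.mp hxy
  exact ⟨_, ⟨_, ⟨X i, rfl⟩, rfl⟩, by simpa [aeval_continuousMapEval_apply] using hi⟩

namespace MvPolynomial

theorem exists_forall_abs_sub_eval_lt {σ : Type*} {K : Set (σ → ℝ)} (hK : IsCompact K)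
    (g : C(σ → ℝ, ℝ)) {ε : ℝ} (hε : 0 < ε) :
    ∃ p : MvPolynomial σ ℝ, ∀ x ∈ K, |g x - eval x p| < ε := by
  obtain ⟨_, ⟨p, rfl⟩, hp⟩ :=
    ContinuousMap.exists_mem_subalgebra_near_continuous_of_isCompact_of_separatesPoints
      (mvPolynomialFunctions_separatesPoints σ) g hK hε
  refine ⟨p, fun x hx => ?_⟩
  simpa [abs_sub_comm, aeval_continuousMapEval_apply] using hp x hx

section EquivariantAverage

variable {ι κ γ R : Type*} [Fintype ι] [DecidableEq ι] [Field R] [CharZero R]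

noncomputable def equivariantAverage (Q : ι → γ → MvPolynomial (ι × κ) R) (i : ι) (c : γ) :
    MvPolynomial (ι × κ) R :=
  𝔼 σ : Perm ι, rename (Prod.map ⇑σ⁻¹ id) (Q (σ i) c)

theorem eval_uncurry_equivariantAverage (Q : ι → γ → MvPolynomial (ι × κ) R) (X : ι → κ → R)
    (i : ι) (c : γ) :
    eval (uncurry X) (equivariantAverage Q i c) =
      𝔼 σ : Perm ι, eval (uncurry (X ∘ ⇑σ⁻¹)) (Q (σ i) c) := by
  refine (map_expect ((aeval (uncurry X)).toLinearMap.restrictScalars ℚ≥0) _ _).trans ?_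
  simp only [LinearMap.coe_restrictScalars, AlgHom.toLinearMap_apply, aeval_rename]
  rfl

theorem eval_uncurry_comp_equivariantAverage (Q : ι → γ → MvPolynomial (ι × κ) R) (π : Perm ι)
    (X : ι → κ → R) (i : ι) (c : γ) :
    eval (uncurry (X ∘ π)) (equivariantAverage Q i c) =
      eval (uncurry X) (equivariantAverage Q (π i) c) := by
  simp only [eval_uncurry_equivariantAverage]
  refine Fintype.expect_equiv (Equiv.mulRight π⁻¹) _ _ fun σ => ?_
  simp [Perm.coe_mul, comp_assoc]

theorem abs_sub_eval_equivariantAverage_le {𝕜 : Type*} [Field 𝕜] [LinearOrder 𝕜]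
    [IsStrictOrderedRing 𝕜] {F : (ι → κ → 𝕜) → ι → γ → 𝕜}
    (hF : ∀ (π : Perm ι) X, F (X ∘ π) = F X ∘ π) (Q : ι → γ → MvPolynomial (ι × κ) 𝕜)
    {X : ι → κ → 𝕜} {ε : 𝕜}
    (hQ : ∀ (σ : Perm ι) i c, |F (X ∘ σ) i c - eval (uncurry (X ∘ σ)) (Q i c)| ≤ ε)
    (i : ι) (c : γ) :
    |F X i c - eval (uncurry X) (equivariantAverage Q i c)| ≤ ε := by
  have hFX : ∀ σ : Perm ι, F (X ∘ ⇑σ⁻¹) (σ i) c = F X i c := fun σ => by simp [hF]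
  rw [eval_uncurry_equivariantAverage, ← Fintype.expect_const (ι := Perm ι) (F X i c),
    ← expect_sub_distrib]
  calc |𝔼 σ : Perm ι, (F X i c - eval (uncurry (X ∘ ⇑σ⁻¹)) (Q (σ i) c))|
      ≤ 𝔼 σ : Perm ι, |F (X ∘ ⇑σ⁻¹) (σ i) c - eval (uncurry (X ∘ ⇑σ⁻¹)) (Q (σ i) c)| := by
        simpa only [hFX] using abs_expect_le _ _
    _ ≤ ε := expect_le univ_nonempty fun σ _ => hQ σ⁻¹ (σ i) c

end EquivariantAverage

end MvPolynomial

/-- Stone–Weierstrass for permutation-equivariant maps: every continuous equivariant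
`f : (ℝ^d)ⁿ → (ℝ^{d'})ⁿ` can be approximated uniformly on compacta by
permutation-equivariant polynomial maps. -/
theorem equivariant_stone_weierstrass (d d' n : ℕ)
    (f : (Fin n → Fin d → ℝ) → (Fin n → Fin d' → ℝ))
    (hcont : Continuous f)
    (hequiv : ∀ π : Equiv.Perm (Fin n), ∀ X : Fin n → Fin d → ℝ, f (X ∘ π) = f X ∘ π) :
    ∀ ε : ℝ, 0 < ε → ∀ D : ℝ, 0 < D →
      ∃ P : Fin n → Fin d' → MvPolynomial (Fin n × Fin d) ℝ,
        (∀ π : Equiv.Perm (Fin n), ∀ X : Fin n → Fin d → ℝ, ∀ i : Fin n, ∀ c : Fin d',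
          MvPolynomial.eval (fun q : Fin n × Fin d => (X ∘ π) q.1 q.2) (P i c)
            = MvPolynomial.eval (fun q : Fin n × Fin d => X q.1 q.2) (P (π i) c)) ∧
        ∀ X : Fin n → Fin d → ℝ, (∀ i j, |X i j| ≤ D) →
          ∀ i : Fin n, ∀ c : Fin d',
            |f X i c - MvPolynomial.eval (fun q : Fin n × Fin d => X q.1 q.2) (P i c)| ≤ ε := by
  intro ε hε D hD
  -- the box `|X i j| ≤ D` is the closed `D`-ball of the sup norm on `Fin n × Fin d → ℝ`
  have hQ (i : Fin n) (c : Fin d') : ∃ p : MvPolynomial (Fin n × Fin d) ℝ,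
      ∀ x ∈ Metric.closedBall 0 D, |f (Function.curry x) i c - eval x p| < ε :=
    exists_forall_abs_sub_eval_lt (isCompact_closedBall 0 D)
      ⟨fun x => f (Function.curry x) i c, by unfold Function.curry; fun_prop⟩ hε
  choose Q hQ using hQ
  refine ⟨equivariantAverage Q, eval_uncurry_comp_equivariantAverage Q, fun X hX =>
    abs_sub_eval_equivariantAverage_le hequiv Q fun σ i c => ?_⟩
  have hXσ : uncurry (X ∘ σ) ∈ Metric.closedBall 0 D := by
    rw [mem_closedBall_zero_iff, pi_norm_le_iff_of_nonneg hD.le]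
    exact fun q => (Real.norm_eq_abs _).trans_le (hX (σ q.1) q.2)
  simpa using (hQ i c _ hXσ).le
end
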